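/- arXiv:1801.02023 — 7 statements merged into one kernel-verified Lean document; each statement's English description precedes it below -/
import Mathlib

section
/- Let p ≥ 2, s ≥ 0, and n > (2s+12)^2. Then ex_p(n, B_{6,s}) = e_p(H(n,6)). Moreover, H(n,6) is the unique extremal graph: a B_{6,s}-free graph G on n vertices satisfies e_p(G) = ex_p(n,B_{6,s}) if and only if G is isomorphic to H(n,6). -/
open Finset

namespace Paper

/-- `Copy H G`: `G` contains a subgraph isomorphic to `H`. -/
def Copy {α β : Type*} (H : SimpleGraph α) (G : SimpleGraph β) : Prop :=
  ∃ f : α ↪ β, ∀ a b, H.Adj a b → G.Adj (f a) (f b)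

/-- `G` is `H`-free. -/
def Free {α β : Type*} (H : SimpleGraph α) (G : SimpleGraph β) : Prop := ¬ Copy H G

/-- Degree of a vertex. -/
noncomputable def degp {V : Type*} (G : SimpleGraph V) (v : V) : ℕ := (G.neighborSet v).ncard

/-- Degree power sum `e_p(G)`. -/
noncomputable def ep {V : Type*} [Fintype V] (p : ℕ) (G : SimpleGraph V) : ℕ :=
  ∑ v, degp G v ^ p

/-- `ex_p(n, H)`. -/
noncomputable def exDP {α : Type*} (n p : ℕ) (H : SimpleGraph α) : ℕ :=
  sSup {m | ∃ G : SimpleGraph (Fin n), Free H G ∧ ep p G = m}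

/-- Join `G + H`. -/
def joinG {α β : Type*} (G : SimpleGraph α) (H : SimpleGraph β) : SimpleGraph (α ⊕ β) :=
  SimpleGraph.fromRel (fun x y =>
    match x, y with
    | Sum.inl a, Sum.inl a' => G.Adj a a'
    | Sum.inr b, Sum.inr b' => H.Adj b b'
    | Sum.inl _, Sum.inr _ => True
    | Sum.inr _, Sum.inl _ => False)

/-- `M_t`: maximum matching on `t` vertices. -/
def matchG (t : ℕ) : SimpleGraph (Fin t) :=
  SimpleGraph.fromRel (fun i j => (i : ℕ) / 2 = (j : ℕ) / 2)

/-- `S_r`: star with `r` leaves. -/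
def starG (r : ℕ) : SimpleGraph (Fin (r + 1)) :=
  SimpleGraph.fromRel (fun i _ => i = 0)

/-- Disjoint union of graphs. -/
def forestG {k : ℕ} (m : Fin k → ℕ) (G : ∀ i, SimpleGraph (Fin (m i))) :
    SimpleGraph ((i : Fin k) × Fin (m i)) :=
  SimpleGraph.fromRel (fun x y => ∃ h : x.1 = y.1, (G y.1).Adj (h ▸ x.2) y.2)

/-- Path on `t` vertices. -/
def pathG (t : ℕ) : SimpleGraph (Fin t) := SimpleGraph.pathGraph t

/-- `H(n, ℓ)`. -/
def HG (n ℓ : ℕ) : SimpleGraph (Fin n) :=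
  SimpleGraph.fromRel (fun i j =>
    (i : ℕ) < ℓ / 2 - 1 ∨ (Odd ℓ ∧ (i : ℕ) = ℓ / 2 - 1 ∧ (j : ℕ) = ℓ / 2))

/-- `H(n, F)` for a linear forest with path orders `ℓ`. -/
def HGF (n : ℕ) {k : ℕ} (ℓ : Fin k → ℕ) : SimpleGraph (Fin n) :=
  SimpleGraph.fromRel (fun i j =>
    (i : ℕ) < (∑ t, ℓ t / 2) - 1 ∨
    ((∀ t, Odd (ℓ t)) ∧ (i : ℕ) = (∑ t, ℓ t / 2) - 1 ∧ (j : ℕ) = ∑ t, ℓ t / 2))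

/-- The broom `B_{ℓ,s}`. -/
def broomG (ℓ s : ℕ) : SimpleGraph (Fin (ℓ + s)) :=
  SimpleGraph.fromRel (fun i j =>
    ((i : ℕ) + 1 = (j : ℕ) ∧ (j : ℕ) < ℓ) ∨ ((i : ℕ) = ℓ - 2 ∧ ℓ ≤ (j : ℕ)))

/-- Near `(r-1)`-regular graph. -/
def NearRegular {V : Type*} [Fintype V] (r : ℕ) (L : SimpleGraph V) : Prop :=
  if Even ((r - 1) * Fintype.card V) then ∀ v, degp L v = r - 1
  else ∃ w, degp L w = r - 2 ∧ ∀ v, v ≠ w → degp L v = r - 1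


variable {n : ℕ}

open Classical in
noncomputable def nb (G : SimpleGraph (Fin n)) (v : Fin n) : Finset (Fin n) :=
  univ.filter (fun w => G.Adj v w)

lemma mem_nb {G : SimpleGraph (Fin n)} {v w : Fin n} : w ∈ nb G v ↔ G.Adj v w := by
  classical
  simp [nb]

lemma degp_eq_nb (G : SimpleGraph (Fin n)) (v : Fin n) : degp G v = (nb G v).card := by
  classical
  rw [degp, Set.ncard_eq_toFinset_card']
  congr 1
  ext w
  simp [nb, SimpleGraph.neighborSet]
  exact Set.mem_toFinset

lemma ep_eq_nb (p : ℕ) (G : SimpleGraph (Fin n)) : ep p G = ∑ v, (nb G v).card ^ p := by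
  rw [ep]
  congr 1
  ext v
  rw [degp_eq_nb]

lemma not_mem_nb_self {G : SimpleGraph (Fin n)} {v : Fin n} : v ∉ nb G v := by
  simp [mem_nb]

lemma ne_of_mem_nb {G : SimpleGraph (Fin n)} {v w : Fin n} (h : w ∈ nb G v) : v ≠ w :=
  (G.ne_of_adj (mem_nb.1 h))

lemma mem_nb_symm {G : SimpleGraph (Fin n)} {v w : Fin n} (h : w ∈ nb G v) : v ∈ nb G w :=
  mem_nb.2 (G.adj_symm (mem_nb.1 h))

private def bfun (v1 v2 v3 v4 v5 : Fin n) (g : ℕ → Fin n) : ℕ → Fin n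
  | 0 => v1
  | 1 => v2
  | 2 => v3
  | 3 => v4
  | 4 => v5
  | (k+5) => g k

lemma copy_broom_of_path {s : ℕ} {G : SimpleGraph (Fin n)} (v1 v2 v3 v4 v5 : Fin n)
    (h12 : G.Adj v1 v2) (h23 : G.Adj v2 v3) (h34 : G.Adj v3 v4) (h45 : G.Adj v4 v5)
    (d13 : v1 ≠ v3) (d14 : v1 ≠ v4) (d15 : v1 ≠ v5) (d24 : v2 ≠ v4) (d25 : v2 ≠ v5)
    (d35 : v3 ≠ v5)
    (hdeg : s + 5 ≤ (nb G v5).card) : Copy (broomG 6 s) G := by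
  classical
  have d12 : v1 ≠ v2 := G.ne_of_adj h12
  have d23 : v2 ≠ v3 := G.ne_of_adj h23
  have d34 : v3 ≠ v4 := G.ne_of_adj h34
  have d45 : v4 ≠ v5 := G.ne_of_adj h45
  set T : Finset (Fin n) := (nb G v5) \ {v1, v2, v3, v4} with hT
  have hTcard : s + 1 ≤ T.card := by
    have h4 : ({v1, v2, v3, v4} : Finset (Fin n)).card ≤ 4 := by
      apply le_trans (Finset.card_insert_le _ _)
      apply Nat.succ_le_succ
      apply le_trans (Finset.card_insert_le _ _)
      apply Nat.succ_le_succ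
      apply le_trans (Finset.card_insert_le _ _)
      simp
    have h5 := Finset.le_card_sdiff ({v1, v2, v3, v4} : Finset (Fin n)) (nb G v5)
    rw [← hT] at h5
    omega
  obtain ⟨T', hT'sub, hT'card⟩ := Finset.exists_subset_card_eq hTcard
  have go := T'.orderIsoOfFin hT'card
  set g : ℕ → Fin n := fun k => (go ⟨k % (s+1), Nat.mod_lt _ (Nat.succ_pos s)⟩ : Fin n) with hg
  have hgT : ∀ k, g k ∈ T := fun k => hT'sub (go _).2
  have hgmem : ∀ k, g k ∈ nb G v5 := fun k => (Finset.mem_sdiff.1 (hgT k)).1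
  have hgne : ∀ k, g k ≠ v1 ∧ g k ≠ v2 ∧ g k ≠ v3 ∧ g k ≠ v4 ∧ g k ≠ v5 := by
    intro k
    have h1 := (Finset.mem_sdiff.1 (hgT k)).2
    simp only [Finset.mem_insert, Finset.mem_singleton] at h1
    push_neg at h1
    refine ⟨h1.1, h1.2.1, h1.2.2.1, h1.2.2.2, ?_⟩
    intro hh
    have := hgmem k
    rw [hh] at this
    exact G.irrefl (mem_nb.1 this)
  have hginj : ∀ k l, k ≤ s → l ≤ s → g k = g l → k = l := by
    intro k l hk hl hkl
    have hks : k % (s+1) = k := Nat.mod_eq_of_lt (by omega)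
    have hls : l % (s+1) = l := Nat.mod_eq_of_lt (by omega)
    have h2 : (⟨k % (s+1), Nat.mod_lt _ (Nat.succ_pos s)⟩ : Fin (s+1)) =
        ⟨l % (s+1), Nat.mod_lt _ (Nat.succ_pos s)⟩ := by
      apply go.injective
      apply Subtype.ext
      exact hkl
    have := congrArg Fin.val h2
    simp only at this
    omega
  set w : ℕ → Fin n := bfun v1 v2 v3 v4 v5 g with hwdef
  have hw0 : w 0 = v1 := rfl
  have hw1 : w 1 = v2 := rfl
  have hw2 : w 2 = v3 := rfl
  have hw3 : w 3 = v4 := rfl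
  have hw4 : w 4 = v5 := rfl
  have hwk : ∀ k, w (k+5) = g k := fun k => rfl
  set L : List (Fin n) := [v1, v2, v3, v4, v5] with hLdef
  have hL : L.Nodup := by
    simp [hLdef, d12, d13, d14, d15, d23, d24, d25, d34, d35, d45]
  have hLlen : L.length = 5 := rfl
  have hwlow : ∀ a, ∀ h : a < 5, w a = L.get ⟨a, by simp only [hLdef, List.length]; omega⟩ := by
    intro a h
    interval_cases a <;> rfl
  have hwlow_mem : ∀ a, a < 5 → w a ∈ L := by
    intro a h
    rw [hwlow a h]
    exact L.get_mem _
  have hwhigh_nmem : ∀ k, w (k+5) ∉ L := by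
    intro k
    rw [hwk]
    have h := hgne k
    simp [hLdef, h.1, h.2.1, h.2.2.1, h.2.2.2.1, h.2.2.2.2]
  have hinj : ∀ a b : Fin (6+s), w a.val = w b.val → a = b := by
    rintro ⟨a, ha⟩ ⟨b, hb⟩ hab
    simp only at hab
    apply Fin.ext
    simp only
    rcases Nat.lt_or_ge a 5 with hA | hA <;> rcases Nat.lt_or_ge b 5 with hB | hB
    · rw [hwlow a hA, hwlow b hB] at hab
      have := (List.Nodup.get_inj_iff hL).1 hab
      exact congrArg Fin.val this
    · exfalso
      obtain ⟨k, rfl⟩ : ∃ k, b = k+5 := ⟨b - 5, by omega⟩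
      exact hwhigh_nmem k (by rw [← hab]; exact hwlow_mem a hA)
    · exfalso
      obtain ⟨k, rfl⟩ : ∃ k, a = k+5 := ⟨a - 5, by omega⟩
      exact hwhigh_nmem k (by rw [hab]; exact hwlow_mem b hB)
    · obtain ⟨k, rfl⟩ : ∃ k, a = k+5 := ⟨a - 5, by omega⟩
      obtain ⟨l, rfl⟩ : ∃ l, b = l+5 := ⟨b - 5, by omega⟩
      rw [hwk, hwk] at hab
      have := hginj k l (by omega) (by omega) hab
      omega
  have hadjw : ∀ k l : ℕ, l < 6 + s → ((k + 1 = l ∧ l < 6) ∨ (k = 4 ∧ 6 ≤ l)) →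
      G.Adj (w k) (w l) := by
    intro k l hl hrel
    rcases hrel with ⟨hkl, hl6⟩ | ⟨hk4, hl6⟩
    · have hk5 : k < 5 := by omega
      subst hkl
      interval_cases k
      · rw [hw0, hw1]; exact h12
      · rw [hw1, hw2]; exact h23
      · rw [hw2, hw3]; exact h34
      · rw [hw3, hw4]; exact h45
      · rw [hw4]
        have h5 : w 5 = g 0 := hwk 0
        rw [show (4:ℕ)+1 = 5 from rfl, h5]
        exact mem_nb.1 (hgmem 0)
    · subst hk4
      obtain ⟨m, rfl⟩ : ∃ m, l = m+5 := ⟨l - 5, by omega⟩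
      rw [hw4, hwk]
      exact mem_nb.1 (hgmem m)
  refine ⟨⟨fun i => w i.val, fun a b hab => hinj a b hab⟩, ?_⟩
  intro a b hab
  rw [broomG, SimpleGraph.fromRel_adj] at hab
  obtain ⟨hne, hr | hr⟩ := hab
  · exact hadjw a.val b.val b.isLt hr
  · exact G.adj_symm (hadjw b.val a.val a.isLt hr)


section Structure

variable {s : ℕ} {G : SimpleGraph (Fin n)}

lemma no_P5_big (hfree : Free (broomG 6 s) G) (v1 v2 v3 v4 v5 : Fin n)
    (h12 : G.Adj v1 v2) (h23 : G.Adj v2 v3) (h34 : G.Adj v3 v4) (h45 : G.Adj v4 v5)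
    (d13 : v1 ≠ v3) (d14 : v1 ≠ v4) (d15 : v1 ≠ v5) (d24 : v2 ≠ v4) (d25 : v2 ≠ v5)
    (d35 : v3 ≠ v5)
    (hdeg : s + 5 ≤ (nb G v5).card) : False :=
  hfree (copy_broom_of_path v1 v2 v3 v4 v5 h12 h23 h34 h45 d13 d14 d15 d24 d25 d35 hdeg)

lemma pick_avoid (S F : Finset (Fin n)) (h : F.card + 1 ≤ S.card) :
    ∃ w, w ∈ S ∧ w ∉ F := by
  have h2 : S.card - F.card ≤ (S \ F).card := Finset.le_card_sdiff F S
  have h3 : 0 < (S \ F).card := by omega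
  obtain ⟨w, hw⟩ := Finset.card_pos.1 h3
  exact ⟨w, (Finset.mem_sdiff.1 hw).1, (Finset.mem_sdiff.1 hw).2⟩

lemma card_pair_le (a b : Fin n) : ({a, b} : Finset (Fin n)).card ≤ 2 := by
  apply le_trans (Finset.card_insert_le _ _)
  simp

lemma card_quad_le (a b c d : Fin n) : ({a, b, c, d} : Finset (Fin n)).card ≤ 4 := by
  apply le_trans (Finset.card_insert_le _ _)
  apply Nat.succ_le_succ
  apply le_trans (Finset.card_insert_le _ _)
  apply Nat.succ_le_succ
  exact card_pair_le _ _

lemma card_triple_le (a b c : Fin n) : ({a, b, c} : Finset (Fin n)).card ≤ 3 := by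
  apply le_trans (Finset.card_insert_le _ _)
  apply Nat.succ_le_succ
  exact card_pair_le _ _

open Classical in
noncomputable def Bset (s : ℕ) (G : SimpleGraph (Fin n)) : Finset (Fin n) :=
  univ.filter (fun v => s + 5 ≤ (nb G v).card)

lemma mem_Bset {v : Fin n} : v ∈ Bset s G ↔ s + 5 ≤ (nb G v).card := by
  classical
  simp [Bset]

/-- If `u` has at least 3 big neighbours, no other vertex is adjacent to two of them. -/
lemma no_two_shared_bigs (hfree : Free (broomG 6 s) G) {u y : Fin n} (hy : y ≠ u)
    (hu : 3 ≤ ((nb G u) ∩ Bset s G).card)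
    (h2 : 2 ≤ ((nb G y) ∩ ((nb G u) ∩ Bset s G)).card) : False := by
  classical
  obtain ⟨a1, ha1, a2, ha2, ha12⟩ := Finset.one_lt_card.1
    (by omega : 1 < ((nb G y) ∩ ((nb G u) ∩ Bset s G)).card)
  have ha1y : a1 ∈ nb G y := (Finset.mem_inter.1 ha1).1
  have ha1u : a1 ∈ nb G u := (Finset.mem_inter.1 (Finset.mem_inter.1 ha1).2).1
  have ha2y : a2 ∈ nb G y := (Finset.mem_inter.1 ha2).1
  have ha2u : a2 ∈ nb G u := (Finset.mem_inter.1 (Finset.mem_inter.1 ha2).2).1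
  have ha2B : a2 ∈ Bset s G := (Finset.mem_inter.1 (Finset.mem_inter.1 ha2).2).2
  have ha1B : a1 ∈ Bset s G := (Finset.mem_inter.1 (Finset.mem_inter.1 ha1).2).2
  obtain ⟨a3, ha3, ha3n⟩ := pick_avoid ((nb G u) ∩ Bset s G) {a1, a2} (by
    have := card_pair_le a1 a2
    omega)
  have ha3u : a3 ∈ nb G u := (Finset.mem_inter.1 ha3).1
  have ha3a1 : a3 ≠ a1 := by intro h; exact ha3n (by simp [h])
  have ha3a2 : a3 ≠ a2 := by intro h; exact ha3n (by simp [h])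
  by_cases hya3 : y = a3
  · -- y = a3 : path (w, a1, u, y, a2)
    obtain ⟨w, hwmem, hwn⟩ := pick_avoid (nb G a1) {u, y, a2} (by
      have h5 : s + 5 ≤ (nb G a1).card := mem_Bset.1 ha1B
      have := card_triple_le u y a2
      omega)
    have hwu : w ≠ u := by intro h; exact hwn (by simp [h])
    have hwy : w ≠ y := by intro h; exact hwn (by simp [h])
    have hwa2 : w ≠ a2 := by intro h; exact hwn (by simp [h])
    refine no_P5_big hfree w a1 u y a2 ?_ ?_ ?_ ?_ hwu hwy hwa2 ?_ ?_ ?_ ?_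
    · exact G.adj_symm (mem_nb.1 hwmem)
    · exact G.adj_symm (mem_nb.1 ha1u)
    · rw [hya3]; exact mem_nb.1 ha3u
    · exact mem_nb.1 ha2y
    · exact (ne_of_mem_nb ha1y).symm
    · exact ha12
    · exact ne_of_mem_nb ha2u
    · exact mem_Bset.1 ha2B
  · -- y ≠ a3 : path (a3, u, a1, y, a2)
    refine no_P5_big hfree a3 u a1 y a2 ?_ ?_ ?_ ?_ ha3a1 ?_ ha3a2 hy.symm ?_ ha12 ?_
    · exact G.adj_symm (mem_nb.1 ha3u)
    · exact mem_nb.1 ha1u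
    · exact G.adj_symm (mem_nb.1 ha1y)
    · exact mem_nb.1 ha2y
    · exact fun h => hya3 h.symm
    · exact ne_of_mem_nb ha2u
    · exact mem_Bset.1 ha2B

/-- A big vertex has at most one neighbour that itself has ≥3 big neighbours. -/
lemma no_two_X_nbrs (hfree : Free (broomG 6 s) G) {a u u' : Fin n} (haB : a ∈ Bset s G)
    (hu : u ∈ nb G a) (hu' : u' ∈ nb G a) (huu' : u ≠ u')
    (hXu : 3 ≤ ((nb G u) ∩ Bset s G).card) (hXu' : 3 ≤ ((nb G u') ∩ Bset s G).card) :
    False := by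
  classical
  by_cases hc : 2 ≤ ((nb G u') ∩ ((nb G u) ∩ Bset s G)).card
  · exact no_two_shared_bigs hfree huu'.symm hXu hc
  · push_neg at hc
    have haI : a ∈ (nb G u') ∩ ((nb G u) ∩ Bset s G) := by
      refine Finset.mem_inter.2 ⟨mem_nb_symm hu', Finset.mem_inter.2 ⟨mem_nb_symm hu, haB⟩⟩
    obtain ⟨a1, ha1, ha1n⟩ := pick_avoid ((nb G u) ∩ Bset s G)
        (((nb G u') ∩ ((nb G u) ∩ Bset s G)) ∪ {u'}) (by
      have hc2 := Finset.card_union_le ((nb G u') ∩ ((nb G u) ∩ Bset s G)) ({u'} : Finset (Fin n))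
      simp only [Finset.card_singleton] at hc2
      omega)
    have ha1u : a1 ∈ nb G u := (Finset.mem_inter.1 ha1).1
    have ha1B : a1 ∈ Bset s G := (Finset.mem_inter.1 ha1).2
    have ha1nu' : a1 ∉ nb G u' := by
      intro h
      exact ha1n (Finset.mem_union.2 (Or.inl (Finset.mem_inter.2 ⟨h, ha1⟩)))
    have ha1neu' : a1 ≠ u' := by
      intro h
      exact ha1n (Finset.mem_union.2 (Or.inr (by simp [h])))
    obtain ⟨a1', ha1', ha1'n⟩ := pick_avoid ((nb G u') ∩ Bset s G) {a, u} (by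
      have := card_pair_le a u
      omega)
    have ha1'u' : a1' ∈ nb G u' := (Finset.mem_inter.1 ha1').1
    have ha1'B : a1' ∈ Bset s G := (Finset.mem_inter.1 ha1').2
    have ha1'a : a1' ≠ a := by intro h; exact ha1'n (by simp [h])
    have ha1'u : a1' ≠ u := by intro h; exact ha1'n (by simp [h])
    refine no_P5_big hfree a1 u a u' a1' ?_ ?_ ?_ ?_ ?_ ha1neu' ?_ huu' ha1'u.symm ha1'a.symm ?_
    · exact G.adj_symm (mem_nb.1 ha1u)
    · exact G.adj_symm (mem_nb.1 hu)
    · exact mem_nb.1 hu'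
    · exact mem_nb.1 ha1'u'
    · intro h; exact ha1n (Finset.mem_union.2 (Or.inl (by rw [h]; exact haI)))
    · intro h; exact ha1nu' (by rw [h]; exact ha1'u')
    · exact mem_Bset.1 ha1'B

/-- Two vertices of degree ≥ n/2+3 admit no edge avoiding them among "their" vertices. -/
lemma hub_edge (hfree : Free (broomG 6 s) G) {a b z w : Fin n} (hab : a ≠ b)
    (hda : n / 2 + 3 ≤ (nb G a).card) (hdb : n / 2 + 3 ≤ (nb G b).card)
    (hsb : s + 5 ≤ (nb G b).card)
    (hz : z ∈ nb G a) (hzb : z ≠ b) (hwz : w ∈ nb G z) (hwa : w ≠ a) (hwb : w ≠ b) :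
    False := by
  classical
  have hcap : 5 ≤ ((nb G a) ∩ (nb G b)).card := by
    have h1 := Finset.card_inter_add_card_union (nb G a) (nb G b)
    have h2 : ((nb G a) ∪ (nb G b)).card ≤ n := by
      have := Finset.card_le_univ ((nb G a) ∪ (nb G b))
      simpa using this
    omega
  obtain ⟨x, hx, hxn⟩ := pick_avoid ((nb G a) ∩ (nb G b)) {a, b, z, w} (by
    have := card_quad_le a b z w
    omega)
  have hxa : x ∈ nb G a := (Finset.mem_inter.1 hx).1
  have hxb : x ∈ nb G b := (Finset.mem_inter.1 hx).2
  have hxz : x ≠ z := by intro h; exact hxn (by simp [h])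
  have hxw : x ≠ w := by intro h; exact hxn (by simp [h])
  refine no_P5_big hfree w z a x b ?_ ?_ ?_ ?_ hwa hxw.symm hwb hxz.symm hzb hab hsb
  · exact G.adj_symm (mem_nb.1 hwz)
  · exact G.adj_symm (mem_nb.1 hz)
  · exact mem_nb.1 hxa
  · exact G.adj_symm (mem_nb.1 hxb)

end Structure

section Counting

variable {s : ℕ} {G : SimpleGraph (Fin n)}

lemma double_count (S T : Finset (Fin n)) :
    ∑ v ∈ S, ((nb G v) ∩ T).card = ∑ x ∈ T, ((nb G x) ∩ S).card := by
  classical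
  have key : ∀ (A B : Finset (Fin n)), ∑ v ∈ A, ((nb G v) ∩ B).card
      = ∑ v ∈ A, ∑ x ∈ B, (if G.Adj v x then 1 else 0) := by
    intro A B
    refine Finset.sum_congr rfl fun v _ => ?_
    have h1 : (nb G v) ∩ B = B.filter (fun x => G.Adj v x) := by
      ext x
      simp only [Finset.mem_inter, Finset.mem_filter, mem_nb]
      tauto
    rw [h1, Finset.card_filter]
  rw [key, key, Finset.sum_comm]
  refine Finset.sum_congr rfl fun x _ => Finset.sum_congr rfl fun v _ => ?_
  congr 1
  simp only [eq_iff_iff]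
  exact ⟨fun h => G.adj_symm h, fun h => G.adj_symm h⟩

open Classical in
lemma claimZ_core (hfree : Free (broomG 6 s) G) (R : Finset (Fin n))
    (hR : ∀ x ∈ R, nb G x ⊆ R) :
    ∑ v ∈ Bset s G ∩ R, (nb G v).card ≤ 2 * R.card + (Bset s G ∩ R).card := by
  classical
  set BR := Bset s G ∩ R with hBR
  have hstep1 : ∑ v ∈ BR, (nb G v).card = ∑ v ∈ BR, ((nb G v) ∩ R).card := by
    refine Finset.sum_congr rfl fun v hv => ?_
    have hvR : v ∈ R := (Finset.mem_inter.1 hv).2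
    rw [Finset.inter_eq_left.2 (hR v hvR)]
  rw [hstep1, double_count BR R]
  have hsplit := Finset.sum_filter_add_sum_filter_not R
    (fun x => 3 ≤ ((nb G x) ∩ Bset s G).card) (fun x => ((nb G x) ∩ BR).card)
  rw [← hsplit]
  have hb2 : ∑ x ∈ R.filter (fun x => ¬ 3 ≤ ((nb G x) ∩ Bset s G).card),
      ((nb G x) ∩ BR).card ≤ 2 * R.card := by
    calc ∑ x ∈ R.filter (fun x => ¬ 3 ≤ ((nb G x) ∩ Bset s G).card), ((nb G x) ∩ BR).card
        ≤ ∑ _x ∈ R.filter (fun x => ¬ 3 ≤ ((nb G x) ∩ Bset s G).card), 2 := by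
          refine Finset.sum_le_sum fun x hx => ?_
          have hx2 := (Finset.mem_filter.1 hx).2
          have hsub : (nb G x) ∩ BR ⊆ (nb G x) ∩ Bset s G := by
            intro y hy
            have := Finset.mem_inter.1 hy
            exact Finset.mem_inter.2 ⟨this.1, (Finset.mem_inter.1 this.2).1⟩
          have := Finset.card_le_card hsub
          omega
      _ = (R.filter (fun x => ¬ 3 ≤ ((nb G x) ∩ Bset s G).card)).card * 2 := by
          rw [Finset.sum_const, smul_eq_mul]
      _ ≤ R.card * 2 := by
          have := Finset.card_filter_le R (fun x => ¬ 3 ≤ ((nb G x) ∩ Bset s G).card)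
          omega
      _ = 2 * R.card := by ring
  have hb1 : ∑ x ∈ R.filter (fun x => 3 ≤ ((nb G x) ∩ Bset s G).card),
      ((nb G x) ∩ BR).card ≤ BR.card := by
    set RX := R.filter (fun x => 3 ≤ ((nb G x) ∩ Bset s G).card) with hRX
    have hflip : ∑ x ∈ RX, ((nb G x) ∩ BR).card = ∑ v ∈ BR, ((nb G v) ∩ RX).card :=
      double_count RX BR
    rw [hflip]
    calc ∑ v ∈ BR, ((nb G v) ∩ RX).card ≤ ∑ _v ∈ BR, 1 := by
          refine Finset.sum_le_sum fun v hv => ?_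
          by_contra hcon
          push_neg at hcon
          obtain ⟨u, hu, u', hu', huu'⟩ := Finset.one_lt_card.1 hcon
          have hvB : v ∈ Bset s G := (Finset.mem_inter.1 hv).1
          have huX : 3 ≤ ((nb G u) ∩ Bset s G).card :=
            (Finset.mem_filter.1 (Finset.mem_inter.1 hu).2).2
          have hu'X : 3 ≤ ((nb G u') ∩ Bset s G).card :=
            (Finset.mem_filter.1 (Finset.mem_inter.1 hu').2).2
          exact no_two_X_nbrs hfree hvB (Finset.mem_inter.1 hu).1
            (Finset.mem_inter.1 hu').1 huu' huX hu'X
      _ = BR.card := by simp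
  omega

lemma claimZ_card (hfree : Free (broomG 6 s) G) (R : Finset (Fin n))
    (hR : ∀ x ∈ R, nb G x ⊆ R) :
    (s+5) * (Bset s G ∩ R).card ≤ ∑ v ∈ Bset s G ∩ R, (nb G v).card := by
  classical
  have h := Finset.card_nsmul_le_sum (Bset s G ∩ R) (fun v => (nb G v).card) (s+5)
    (fun v hv => mem_Bset.1 (Finset.mem_inter.1 hv).1)
  simpa [smul_eq_mul, mul_comm] using h

lemma claimZ5 (hfree : Free (broomG 6 s) G) (R : Finset (Fin n))
    (hR : ∀ x ∈ R, nb G x ⊆ R) :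
    2 * ∑ v ∈ Bset s G ∩ R, (nb G v).card ≤ 5 * R.card := by
  have h1 := claimZ_core hfree R hR
  have h2 := claimZ_card hfree R hR
  -- (s+5) m ≤ A,  A ≤ 2r + m  ⇒  2A ≤ 5r
  set A := ∑ v ∈ Bset s G ∩ R, (nb G v).card
  set mm := (Bset s G ∩ R).card
  have h3 : 5 * mm ≤ A := le_trans (by nlinarith) h2
  omega

lemma claimZQ (hfree : Free (broomG 6 s) G) (R : Finset (Fin n))
    (hR : ∀ x ∈ R, nb G x ⊆ R) :
    (s+4) * ∑ v ∈ Bset s G ∩ R, (nb G v).card ≤ 2 * (s+5) * R.card := by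
  have h1 := claimZ_core hfree R hR
  have h2 := claimZ_card hfree R hR
  set A := ∑ v ∈ Bset s G ∩ R, (nb G v).card
  set mm := (Bset s G ∩ R).card
  have h4 : (s+5) * A ≤ (s+5) * (2 * R.card + mm) := Nat.mul_le_mul_left _ h1
  nlinarith

end Counting

section Arith

/-- `b^p + p(a-b)b^(p-1) ≤ a^p` for `b ≤ a`, `1 ≤ p`. -/
lemma pow_lin {a b : ℕ} (p : ℕ) (hp : 1 ≤ p) (hba : b ≤ a) :
    b ^ p + p * (a - b) * b ^ (p - 1) ≤ a ^ p := by
  obtain ⟨d, rfl⟩ : ∃ d, a = b + d := ⟨a - b, by omega⟩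
  have hd : b + d - b = d := by omega
  rw [hd]
  induction p, hp using Nat.le_induction with
  | base => simp [pow_one]
  | succ p hp ih =>
    have h1 : (b + d) ^ (p + 1) = (b + d) * (b + d) ^ p := by ring
    have h2 : (b + d) * (b ^ p + p * d * b ^ (p - 1)) ≤ (b + d) * (b + d) ^ p :=
      Nat.mul_le_mul_left _ ih
    have h3 : b ^ (p - 1) * b = b ^ p := by
      rw [← pow_succ]
      congr 1
      omega
    have h4 : b ^ (p + 1) + (p + 1) * d * b ^ (p + 1 - 1)
        ≤ (b + d) * (b ^ p + p * d * b ^ (p - 1)) := by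
      have : (b + d) * (b ^ p + p * d * b ^ (p - 1))
          = b ^ (p+1) + p * d * (b ^ (p-1) * b) + d * b ^ p + p * (d * d) * b ^ (p-1) := by
        ring
      rw [this, h3]
      have h5 : (p + 1) * d * b ^ (p + 1 - 1) = p * d * b ^ p + d * b ^ p := by
        have : p + 1 - 1 = p := by omega
        rw [this]; ring
      rw [h5]
      omega
    calc b ^ (p + 1) + (p + 1) * d * b ^ (p + 1 - 1)
        ≤ (b + d) * (b ^ p + p * d * b ^ (p - 1)) := h4
      _ ≤ (b + d) * (b + d) ^ p := h2
      _ = (b + d) ^ (p + 1) := h1.symm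

lemma arith_base (sQ m S : ℕ) (hQ : 4 ≤ sQ) (hm : 4 * (sQ + 2) ^ 2 ≤ m) (hm144 : 144 ≤ m)
    (hQS : sQ * S ≤ 2 * (sQ + 1) * (m + 1)) (θ : ℕ) (hθ : 2 * θ ≤ m + 7) :
    20 * (θ * (S - m) + (m + 1) * sQ ^ 2) ≤ 19 * m ^ 2 := by
  rcases Nat.le_total S m with hSm | hSm
  · have h0 : S - m = 0 := by omega
    rw [h0]
    nlinarith [sq_nonneg (sQ + 2), sq_nonneg m]
  · set D := S - m with hD
    have hSD : S = m + D := by omega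
    have hQD : sQ * m + sQ * D ≤ 2 * (sQ + 1) * (m + 1) := by
      calc sQ * m + sQ * D = sQ * S := by rw [hSD]; ring
        _ ≤ 2 * (sQ + 1) * (m + 1) := hQS
    -- show 2*Q*(goal) form
    have key : 2 * (sQ * (20 * (θ * D + (m + 1) * sQ ^ 2))) ≤ 2 * (sQ * (19 * m ^ 2)) := by
      have hQD2 : sQ * D ≤ sQ * m + 2 * m + 2 * sQ + 2 := by nlinarith
      have h1 : 2 * (sQ * (20 * (θ * D))) = 20 * ((2 * θ) * (sQ * D)) := by ring
      have h2 : 20 * ((2 * θ) * (sQ * D)) ≤ 20 * ((m + 7) * (sQ * m + 2 * m + 2 * sQ + 2)) := by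
        apply Nat.mul_le_mul_left
        exact Nat.mul_le_mul hθ hQD2
      have h3 : 2 * (sQ * (20 * ((m + 1) * sQ ^ 2))) = 40 * (m + 1) * sQ ^ 3 := by ring
      have main : 20 * ((m + 7) * (sQ * m + 2 * m + 2 * sQ + 2)) + 40 * (m + 1) * sQ ^ 3
          ≤ 38 * sQ * m ^ 2 := by
        have e1 : 40*m*sQ^3 + 160*sQ^2*m + 160*sQ*m ≤ 10*sQ*m^2 := by
          calc 40*m*sQ^3 + 160*sQ^2*m + 160*sQ*m = 10*sQ*m*(4*(sQ+2)^2) := by ring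
            _ ≤ 10*sQ*m*m := Nat.mul_le_mul_left _ hm
            _ = 10*sQ*m^2 := by ring
        have hQm : sQ ≤ m := by nlinarith
        rcases (by omega : sQ = 4 ∨ 5 ≤ sQ) with rfl | hQ5
        · nlinarith [Nat.mul_le_mul hm144 (le_refl m)]
        · nlinarith [e1, Nat.mul_le_mul hm144 (le_refl (sQ*m)),
            Nat.mul_le_mul hQ5 (le_refl (m^2)),
            Nat.mul_le_mul hQm (le_refl (sQ*sQ)), Nat.mul_le_mul hm144 (le_refl sQ)]
      calc 2 * (sQ * (20 * (θ * D + (m + 1) * sQ ^ 2)))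
          = 20 * ((2 * θ) * (sQ * D)) + 40 * (m + 1) * sQ ^ 3 := by ring
        _ ≤ 20 * ((m + 7) * (sQ * m + 2 * m + 2 * sQ + 2)) + 40 * (m + 1) * sQ ^ 3 := by omega
        _ ≤ 38 * sQ * m ^ 2 := main
        _ ≤ 2 * (sQ * (19 * m ^ 2)) := by ring_nf; omega
    have hpos : 0 < 2 * sQ := by omega
    have := Nat.le_of_mul_le_mul_left (by
      calc (2 * sQ) * (20 * (θ * D + (m + 1) * sQ ^ 2))
          = 2 * (sQ * (20 * (θ * D + (m + 1) * sQ ^ 2))) := by ring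
        _ ≤ 2 * (sQ * (19 * m ^ 2)) := key
        _ = (2 * sQ) * (19 * m ^ 2) := by ring) hpos
    exact this

lemma arith_main (p sQ m S θ : ℕ) (hp : 2 ≤ p) (hQ : 4 ≤ sQ)
    (hm : 4 * (sQ + 2) ^ 2 ≤ m) (hm144 : 144 ≤ m)
    (hQS : sQ * S ≤ 2 * (sQ + 1) * (m + 1)) (hθ : 2 * θ ≤ m + 7)
    (hQθ : sQ ≤ θ) (hθm : θ ≤ m) :
    20 * (θ ^ (p - 1) * (S - m) + (m + 1) * sQ ^ p) ≤ 19 * m ^ p := by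
  induction p, hp using Nat.le_induction with
  | base => simpa using arith_base sQ m S hQ hm hm144 hQS θ hθ
  | succ p hp2 ih =>
    have hθp : θ ^ (p + 1 - 1) = θ * θ ^ (p - 1) := by
      have h1 : p + 1 - 1 = (p - 1) + 1 := by omega
      rw [h1, pow_succ]; ring
    have hQp : sQ ^ (p + 1) = sQ * sQ ^ p := by rw [pow_succ]; ring
    have step : 20 * (θ ^ (p + 1 - 1) * (S - m) + (m + 1) * sQ ^ (p + 1))
        ≤ θ * (20 * (θ ^ (p - 1) * (S - m) + (m + 1) * sQ ^ p)) := by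
      rw [hθp, hQp]
      have : (m + 1) * (sQ * sQ ^ p) ≤ θ * ((m + 1) * sQ ^ p) := by
        calc (m + 1) * (sQ * sQ ^ p) = sQ * ((m + 1) * sQ ^ p) := by ring
          _ ≤ θ * ((m + 1) * sQ ^ p) := Nat.mul_le_mul_right _ hQθ
      calc 20 * (θ * θ ^ (p - 1) * (S - m) + (m + 1) * (sQ * sQ ^ p))
          ≤ 20 * (θ * (θ ^ (p - 1) * (S - m)) + θ * ((m + 1) * sQ ^ p)) := by
            apply Nat.mul_le_mul_left
            have h2 : θ * θ ^ (p - 1) * (S - m) = θ * (θ ^ (p - 1) * (S - m)) := by ring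
            omega
        _ = θ * (20 * (θ ^ (p - 1) * (S - m) + (m + 1) * sQ ^ p)) := by ring
    calc 20 * (θ ^ (p + 1 - 1) * (S - m) + (m + 1) * sQ ^ (p + 1))
        ≤ θ * (20 * (θ ^ (p - 1) * (S - m) + (m + 1) * sQ ^ p)) := step
      _ ≤ θ * (19 * m ^ p) := Nat.mul_le_mul_left _ ih
      _ ≤ m * (19 * m ^ p) := Nat.mul_le_mul_right _ hθm
      _ = 19 * m ^ (p + 1) := by rw [pow_succ]; ring

end Arith

section MainA

variable {s p : ℕ} {G : SimpleGraph (Fin n)}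

lemma nb_card_le (G : SimpleGraph (Fin n)) (v : Fin n) : (nb G v).card ≤ n - 1 := by
  have hsub : nb G v ⊆ univ.erase v := by
    intro w hw
    exact Finset.mem_erase.2 ⟨(ne_of_mem_nb hw).symm, Finset.mem_univ w⟩
  have h := Finset.card_le_card hsub
  rwa [Finset.card_erase_of_mem (Finset.mem_univ v), Finset.card_univ, Fintype.card_fin] at h

lemma hn_facts (hn : (2*s+12)^2 < n) :
    4 * ((s+4) + 2) ^ 2 ≤ n - 1 ∧ 144 ≤ n - 1 ∧ (s+4) ≤ n/2+3 ∧ n/2+3 ≤ n-1 ∧ 145 ≤ n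
      ∧ s+5 ≤ n/2+3 ∧ (s+4)^2 ≤ n/2+3 := by
  have h1 : (2*s+12)^2 = 4*(s+6)^2 := by ring
  have h2 : 6*(s+6) ≤ (s+6)^2 := by nlinarith
  have h3 : 36 ≤ (s+6)^2 := by nlinarith
  have h4 : (s+4)+2 = s+6 := by omega
  have h5 : (s+4)^2 + 16 ≤ 2*((s+6)^2) := by nlinarith
  rw [h4]
  omega

lemma at_most_one_hub (hfree : Free (broomG 6 s) G) (hp : 2 ≤ p)
    (hn : (2*s+12)^2 < n)
    (hhub : ∀ a b : Fin n, a ≠ b → n/2+3 ≤ (nb G a).card → n/2+3 ≤ (nb G b).card → False) :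
    ep p G < 2 * (n-1)^p := by
  classical
  obtain ⟨hm, hm144, hQθ, hθm, hn145, hs5, hsq⟩ := hn_facts hn
  set m := n - 1 with hmdef
  set θ := n/2+3 with hθdef
  set Q := s+4 with hQdef
  set S := ∑ v ∈ Bset s G, (nb G v).card with hSdef
  have hQS : Q * S ≤ 2 * (Q+1) * (m+1) := by
    have h := claimZQ hfree univ (fun x _ => Finset.subset_univ _)
    rw [Finset.inter_univ] at h
    have hcu : (univ : Finset (Fin n)).card = n := by
      rw [Finset.card_univ, Fintype.card_fin]
    rw [hcu] at h
    have hQ1 : Q + 1 = s + 5 := by omega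
    have hmn : m + 1 = n := by omega
    rw [hQ1, hmn]
    exact h
  have hθ2 : 2 * θ ≤ m + 7 := by omega
  have hAR := arith_main p Q m S θ hp (by omega) hm hm144 hQS hθ2 hQθ hθm
  -- split the sum
  have hep : ep p G = ∑ v ∈ Bset s G, (nb G v).card ^ p
      + ∑ v ∈ univ.filter (fun v => ¬ (s + 5 ≤ (nb G v).card)), (nb G v).card ^ p := by
    rw [ep_eq_nb]
    rw [← Finset.sum_filter_add_sum_filter_not univ (fun v => s + 5 ≤ (nb G v).card)]
    rfl
  have hrest : ∑ v ∈ univ.filter (fun v => ¬ (s + 5 ≤ (nb G v).card)), (nb G v).card ^ p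
      ≤ (m+1) * Q ^ p := by
    calc ∑ v ∈ univ.filter (fun v => ¬ (s + 5 ≤ (nb G v).card)), (nb G v).card ^ p
        ≤ ∑ _v ∈ univ.filter (fun v => ¬ (s + 5 ≤ (nb G v).card)), Q ^ p := by
          refine Finset.sum_le_sum fun v hv => ?_
          have hv2 := (Finset.mem_filter.1 hv).2
          exact Nat.pow_le_pow_left (by omega) p
      _ = (univ.filter (fun v => ¬ (s + 5 ≤ (nb G v).card))).card * Q ^ p := by
          rw [Finset.sum_const, smul_eq_mul]
      _ ≤ (m+1) * Q ^ p := by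
          have h1 := Finset.card_filter_le (univ : Finset (Fin n))
            (fun v => ¬ (s + 5 ≤ (nb G v).card))
          have h2 : (univ : Finset (Fin n)).card = n := by
            rw [Finset.card_univ, Fintype.card_fin]
          have : m + 1 = n := by omega
          apply Nat.mul_le_mul_right
          omega
  have hBsum : ∑ v ∈ Bset s G, (nb G v).card ^ p ≤ m ^ p + θ ^ (p-1) * (S - m) := by
    rcases Finset.eq_empty_or_nonempty (Bset s G) with hBe | hBne
    · rw [hBe]
      simp
    · obtain ⟨v1, hv1, hmax⟩ := Finset.exists_max_image (Bset s G)
        (fun v => (nb G v).card) hBne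
      set d1 := (nb G v1).card with hd1def
      have hothers : ∀ v ∈ (Bset s G).erase v1, (nb G v).card ≤ θ := by
        intro v hv
        have hvB := Finset.mem_of_mem_erase hv
        have hvne := Finset.ne_of_mem_erase hv
        by_cases hc : θ ≤ (nb G v).card
        · exact absurd (hhub v v1 hvne hc (le_trans hc (hmax v hvB))) (fun h => h)
        · omega
      have hsplit : ∑ v ∈ (Bset s G).erase v1, (nb G v).card ^ p + d1 ^ p
          = ∑ v ∈ Bset s G, (nb G v).card ^ p :=
        Finset.sum_erase_add _ _ hv1
      have hsplit2 : ∑ v ∈ (Bset s G).erase v1, (nb G v).card + d1 = S :=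
        Finset.sum_erase_add _ _ hv1
      have herase : ∑ v ∈ (Bset s G).erase v1, (nb G v).card ^ p
          ≤ θ ^ (p-1) * (S - d1) := by
        have hpoint : ∀ v ∈ (Bset s G).erase v1, (nb G v).card ^ p
            ≤ θ ^ (p-1) * (nb G v).card := by
          intro v hv
          have h1 : (nb G v).card ^ p = (nb G v).card ^ (p-1) * (nb G v).card := by
            rw [← pow_succ]
            congr 1
            omega
          rw [h1]
          exact Nat.mul_le_mul_right _ (Nat.pow_le_pow_left (hothers v hv) _)
        calc ∑ v ∈ (Bset s G).erase v1, (nb G v).card ^ p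
            ≤ ∑ v ∈ (Bset s G).erase v1, θ ^ (p-1) * (nb G v).card :=
              Finset.sum_le_sum hpoint
          _ = θ ^ (p-1) * ∑ v ∈ (Bset s G).erase v1, (nb G v).card := by
              rw [Finset.mul_sum]
          _ = θ ^ (p-1) * (S - d1) := by
              congr 1
              omega
      have hd1m : d1 ≤ m := by
        have := nb_card_le G v1
        omega
      have hd1S : d1 ≤ S := by omega
      have hkey : d1 ^ p + θ ^ (p-1) * (S - d1) ≤ m ^ p + θ ^ (p-1) * (S - m) := by
        by_cases hcase : θ ≤ d1
        · have hpl := pow_lin p (by omega : 1 ≤ p) hd1m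
          have hge : θ ^ (p-1) ≤ d1 ^ (p-1) := Nat.pow_le_pow_left hcase _
          have hA : d1 ^ p + (m - d1) * θ ^ (p-1) ≤ m ^ p := by
            have h2 : (m - d1) * θ ^ (p-1) ≤ p * (m - d1) * d1 ^ (p-1) := by
              calc (m - d1) * θ ^ (p-1) ≤ (m - d1) * d1 ^ (p-1) :=
                    Nat.mul_le_mul_left _ hge
                _ ≤ p * (m - d1) * d1 ^ (p-1) := by
                    have : 1 * ((m - d1) * d1 ^ (p-1)) ≤ p * ((m - d1) * d1 ^ (p-1)) :=
                      Nat.mul_le_mul_right _ (by omega)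
                    calc (m - d1) * d1 ^ (p-1) = 1 * ((m - d1) * d1 ^ (p-1)) := by ring
                      _ ≤ p * ((m - d1) * d1 ^ (p-1)) := this
                      _ = p * (m - d1) * d1 ^ (p-1) := by ring
            omega
          have hB2 : S - d1 ≤ (S - m) + (m - d1) := by omega
          calc d1 ^ p + θ ^ (p-1) * (S - d1)
              ≤ d1 ^ p + θ ^ (p-1) * ((S - m) + (m - d1)) := by
                have := Nat.mul_le_mul_left (θ ^ (p-1)) hB2
                omega
            _ = (d1 ^ p + (m - d1) * θ ^ (p-1)) + θ ^ (p-1) * (S - m) := by ring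
            _ ≤ m ^ p + θ ^ (p-1) * (S - m) := Nat.add_le_add_right hA _
        · push_neg at hcase
          have h1 : d1 ^ p ≤ θ ^ (p-1) * d1 := by
            have h2 : d1 ^ p = d1 ^ (p-1) * d1 := by
              rw [← pow_succ]
              congr 1
              omega
            rw [h2]
            exact Nat.mul_le_mul_right _ (Nat.pow_le_pow_left (by omega) _)
          have h3 : θ ^ (p-1) * d1 + θ ^ (p-1) * (S - d1) = θ ^ (p-1) * S := by
            rw [← Nat.mul_add]
            congr 1
            omega
          have h4 : θ ^ (p-1) * S ≤ θ ^ (p-1) * m + θ ^ (p-1) * (S - m) := by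
            rw [← Nat.mul_add]
            apply Nat.mul_le_mul_left
            omega
          have h5 : θ ^ (p-1) * m ≤ m ^ p := by
            calc θ ^ (p-1) * m ≤ m ^ (p-1) * m := Nat.mul_le_mul_right _
                  (Nat.pow_le_pow_left hθm _)
              _ = m ^ p := by
                  rw [← pow_succ]
                  congr 1
                  omega
          omega
      omega
  -- combine
  have hfin : ep p G ≤ m ^ p + (θ ^ (p-1) * (S - m) + (m+1) * Q ^ p) := by omega
  have h20 : 20 * ep p G ≤ 39 * m ^ p := by
    have := hAR
    omega
  have hMpos : 1 ≤ m ^ p := Nat.one_le_pow _ _ (by omega)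
  omega

end MainA

section MainStructure

variable {s p : ℕ} {G : SimpleGraph (Fin n)}

lemma main_structure (hfree : Free (broomG 6 s) G) (hp : 2 ≤ p) (hn : (2*s+12)^2 < n)
    (hW : 2*(n-1)^p + (n-2)*2^p ≤ ep p G) :
    ∃ a b : Fin n, a ≠ b ∧
      (∀ x y : Fin n, G.Adj x y ↔ (x ≠ y ∧ (x = a ∨ x = b ∨ y = a ∨ y = b))) := by
  classical
  obtain ⟨hm, hm144, hQθ, hθm, hn145, hs5, hsq⟩ := hn_facts hn
  -- Step 1 : two hubs
  have hhub : ∃ a b : Fin n, a ≠ b ∧ n/2+3 ≤ (nb G a).card ∧ n/2+3 ≤ (nb G b).card := by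
    by_contra hcon
    push_neg at hcon
    have h1 : ∀ a b : Fin n, a ≠ b → n/2+3 ≤ (nb G a).card → n/2+3 ≤ (nb G b).card → False := by
      intro a b hab ha hb
      have := hcon a b hab ha
      omega
    have h2 := at_most_one_hub hfree hp hn h1
    have h3 : 2*(n-1)^p ≤ ep p G := by omega
    omega
  obtain ⟨a, b, hab, hda, hdb⟩ := hhub
  have hsa : s + 5 ≤ (nb G a).card := le_trans hs5 hda
  have hsb : s + 5 ≤ (nb G b).card := le_trans hs5 hdb
  -- Step 2 : no edges avoiding the hubs
  have hnoedge : ∀ z w : Fin n, z ≠ a → z ≠ b → w ≠ a → w ≠ b →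
      (z ∈ nb G a ∨ z ∈ nb G b) → w ∉ nb G z := by
    intro z w hza hzb hwa hwb hz hwz
    rcases hz with hz | hz
    · exact hub_edge hfree hab hda hdb hsb hz hzb hwz hwa hwb
    · exact hub_edge hfree hab.symm hdb hda hsa hz hza hwz hwb hwa
  set Cs : Finset (Fin n) := insert a (insert b ((nb G a) ∪ (nb G b))) with hCs
  set R : Finset (Fin n) := univ \ Cs with hRdef
  have hmemCs : ∀ x, x ∈ Cs ↔ (x = a ∨ x = b ∨ x ∈ nb G a ∨ x ∈ nb G b) := by
    intro x
    simp [hCs]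
  have hRmem : ∀ x, x ∈ R ↔ (x ≠ a ∧ x ≠ b ∧ x ∉ nb G a ∧ x ∉ nb G b) := by
    intro x
    simp only [hRdef, Finset.mem_sdiff, Finset.mem_univ, true_and, hmemCs]
    push_neg
    tauto
  -- R is closed under adjacency
  have hRclosed : ∀ x ∈ R, nb G x ⊆ R := by
    intro x hx w hw
    obtain ⟨hxa, hxb, hxna, hxnb⟩ := (hRmem x).1 hx
    have hwa : w ≠ a := by
      rintro rfl
      exact hxna (mem_nb_symm hw)
    have hwb : w ≠ b := by
      rintro rfl
      exact hxnb (mem_nb_symm hw)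
    refine (hRmem w).2 ⟨hwa, hwb, fun hwna => ?_, fun hwnb => ?_⟩
    · exact hnoedge w x hwa hwb hxa hxb (Or.inl hwna) (mem_nb_symm hw)
    · exact hnoedge w x hwa hwb hxa hxb (Or.inr hwnb) (mem_nb_symm hw)
  -- vertices of Cs other than a,b have neighbourhood inside {a,b}
  have hlow : ∀ z, z ≠ a → z ≠ b → (z ∈ nb G a ∨ z ∈ nb G b) →
      nb G z ⊆ ({a, b} : Finset (Fin n)) := by
    intro z hza hzb hz w hw
    by_contra hwab
    simp only [Finset.mem_insert, Finset.mem_singleton] at hwab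
    push_neg at hwab
    exact hnoedge z w hza hzb hwab.1 hwab.2 hz hw
  have hlowdeg : ∀ z, z ≠ a → z ≠ b → (z ∈ nb G a ∨ z ∈ nb G b) → (nb G z).card ≤ 2 := by
    intro z hza hzb hz
    have h1 := Finset.card_le_card (hlow z hza hzb hz)
    exact le_trans h1 (card_pair_le a b)
  -- cardinalities
  have haCs : a ∈ Cs := by rw [hmemCs]; left; rfl
  have hbCs : b ∈ Cs := by rw [hmemCs]; right; left; rfl
  set c := Cs.card with hc
  set r := R.card with hr
  have hcr : c + r = n := by
    have h1 : r = n - c := by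
      rw [hr, hRdef, Finset.card_sdiff_of_subset (Finset.subset_univ Cs)]
      congr 1
      rw [Finset.card_univ, Fintype.card_fin]
    have h2 : c ≤ n := by
      have h3 := Finset.card_le_univ Cs
      simp only [Fintype.card_fin] at h3
      omega
    omega
  have hθc : n/2 + 3 + 1 ≤ c := by
    have hsub : insert a (nb G a) ⊆ Cs := by
      intro x hx
      rcases Finset.mem_insert.1 hx with rfl | hx2
      · exact haCs
      · rw [hmemCs]; right; right; left; exact hx2
    have hcard : (insert a (nb G a)).card = (nb G a).card + 1 :=
      Finset.card_insert_of_notMem not_mem_nb_self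
    have := Finset.card_le_card hsub
    omega
  have hrc : r + 6 ≤ c := by omega
  -- degree bounds on Cs
  have hdegaC : (nb G a).card ≤ c - 1 := by
    have hsub : nb G a ⊆ Cs.erase a := by
      intro x hx
      refine Finset.mem_erase.2 ⟨(ne_of_mem_nb hx).symm, ?_⟩
      rw [hmemCs]; right; right; left; exact hx
    have := Finset.card_le_card hsub
    rwa [Finset.card_erase_of_mem haCs] at this
  have hdegbC : (nb G b).card ≤ c - 1 := by
    have hsub : nb G b ⊆ Cs.erase b := by
      intro x hx
      refine Finset.mem_erase.2 ⟨(ne_of_mem_nb hx).symm, ?_⟩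
      rw [hmemCs]; right; right; right; exact hx
    have := Finset.card_le_card hsub
    rwa [Finset.card_erase_of_mem hbCs] at this
  -- the split of ep
  have hepsplit : ep p G = ∑ v ∈ R, (nb G v).card ^ p + ∑ v ∈ Cs, (nb G v).card ^ p := by
    rw [ep_eq_nb]
    exact (Finset.sum_sdiff (Finset.subset_univ Cs)).symm
  -- sum over Cs
  have hberase : b ∈ Cs.erase a := Finset.mem_erase.2 ⟨hab.symm, hbCs⟩
  have hCssum : ∑ v ∈ Cs, (nb G v).card ^ p
      ≤ (nb G a).card ^ p + (nb G b).card ^ p + (c-2) * 2^p := by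
    have h1 : ∑ v ∈ Cs.erase a, (nb G v).card ^ p + (nb G a).card ^ p
        = ∑ v ∈ Cs, (nb G v).card ^ p := Finset.sum_erase_add _ _ haCs
    have h2 : ∑ v ∈ (Cs.erase a).erase b, (nb G v).card ^ p + (nb G b).card ^ p
        = ∑ v ∈ Cs.erase a, (nb G v).card ^ p := Finset.sum_erase_add _ _ hberase
    have h3 : ∑ v ∈ (Cs.erase a).erase b, (nb G v).card ^ p ≤ (c-2) * 2^p := by
      calc ∑ v ∈ (Cs.erase a).erase b, (nb G v).card ^ p
          ≤ ∑ _v ∈ (Cs.erase a).erase b, 2^p := by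
            refine Finset.sum_le_sum fun v hv => ?_
            have hvb := Finset.ne_of_mem_erase hv
            have hva := Finset.ne_of_mem_erase (Finset.mem_of_mem_erase hv)
            have hvC := Finset.mem_of_mem_erase (Finset.mem_of_mem_erase hv)
            have hvor : v ∈ nb G a ∨ v ∈ nb G b := by
              rcases (hmemCs v).1 hvC with h | h | h | h
              · exact absurd h hva
              · exact absurd h hvb
              · exact Or.inl h
              · exact Or.inr h
            exact Nat.pow_le_pow_left (hlowdeg v hva hvb hvor) p
        _ = ((Cs.erase a).erase b).card * 2^p := by rw [Finset.sum_const, smul_eq_mul]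
        _ = (c-2) * 2^p := by
            rw [Finset.card_erase_of_mem hberase, Finset.card_erase_of_mem haCs]
            congr 1
    omega
  -- sum over R
  have hRdeg : ∀ v ∈ R, (nb G v).card ≤ r - 1 := by
    intro v hv
    have hsub : nb G v ⊆ R.erase v := by
      intro w hw
      exact Finset.mem_erase.2 ⟨(ne_of_mem_nb hw).symm, hRclosed v hv hw⟩
    have := Finset.card_le_card hsub
    rwa [Finset.card_erase_of_mem hv] at this
  have hRsum : 2 * ∑ v ∈ R, (nb G v).card ^ p ≤ 7 * (r * (c-1)^(p-1)) := by
    have hfilter : R.filter (fun v => s + 5 ≤ (nb G v).card) = Bset s G ∩ R := by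
      ext x
      simp only [Finset.mem_filter, Finset.mem_inter, mem_Bset]
      tauto
    have hsplitR := Finset.sum_filter_add_sum_filter_not R
      (fun v => s + 5 ≤ (nb G v).card) (fun v => (nb G v).card ^ p)
    -- big part
    have hbigpart : ∑ v ∈ Bset s G ∩ R, (nb G v).card ^ p
        ≤ (c-1)^(p-1) * ∑ v ∈ Bset s G ∩ R, (nb G v).card := by
      rw [Finset.mul_sum]
      refine Finset.sum_le_sum fun v hv => ?_
      have hvR : v ∈ R := (Finset.mem_inter.1 hv).2
      have hdv : (nb G v).card ≤ c - 1 := by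
        have := hRdeg v hvR
        omega
      have h1 : (nb G v).card ^ p = (nb G v).card ^ (p-1) * (nb G v).card := by
        rw [← pow_succ]
        congr 1
        omega
      rw [h1]
      exact Nat.mul_le_mul_right _ (Nat.pow_le_pow_left hdv _)
    have hbig2 : 2 * ∑ v ∈ Bset s G ∩ R, (nb G v).card ≤ 5 * r :=
      claimZ5 hfree R hRclosed
    -- small part
    have hQc : (s+4)^p ≤ (c-1)^(p-1) := by
      have h1 : (s+4)^p ≤ ((s+4)^2)^(p-1) := by
        calc (s+4)^p ≤ (s+4)^(2*(p-1)) :=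
              Nat.pow_le_pow_right (by omega) (by omega)
          _ = ((s+4)^2)^(p-1) := by rw [← pow_mul]
      have h2 : ((s+4)^2)^(p-1) ≤ (n/2+3)^(p-1) := Nat.pow_le_pow_left hsq _
      have h3 : (n/2+3)^(p-1) ≤ (c-1)^(p-1) := Nat.pow_le_pow_left (by omega) _
      omega
    have hsmallpart : ∑ v ∈ R.filter (fun v => ¬ (s + 5 ≤ (nb G v).card)), (nb G v).card ^ p
        ≤ r * (c-1)^(p-1) := by
      calc ∑ v ∈ R.filter (fun v => ¬ (s + 5 ≤ (nb G v).card)), (nb G v).card ^ p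
          ≤ ∑ _v ∈ R.filter (fun v => ¬ (s + 5 ≤ (nb G v).card)), (c-1)^(p-1) := by
            refine Finset.sum_le_sum fun v hv => ?_
            have hv2 := (Finset.mem_filter.1 hv).2
            calc (nb G v).card ^ p ≤ (s+4)^p :=
                  Nat.pow_le_pow_left (by omega) p
              _ ≤ (c-1)^(p-1) := hQc
        _ = (R.filter (fun v => ¬ (s + 5 ≤ (nb G v).card))).card * (c-1)^(p-1) := by
            rw [Finset.sum_const, smul_eq_mul]
        _ ≤ r * (c-1)^(p-1) := by
            apply Nat.mul_le_mul_right
            exact le_trans (Finset.card_filter_le _ _) (le_refl r)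
    -- combine
    have hbig3 : 2 * ∑ v ∈ Bset s G ∩ R, (nb G v).card ^ p ≤ 5 * (r * (c-1)^(p-1)) := by
      calc 2 * ∑ v ∈ Bset s G ∩ R, (nb G v).card ^ p
          ≤ 2 * ((c-1)^(p-1) * ∑ v ∈ Bset s G ∩ R, (nb G v).card) :=
            Nat.mul_le_mul_left _ hbigpart
        _ = (c-1)^(p-1) * (2 * ∑ v ∈ Bset s G ∩ R, (nb G v).card) := by ring
        _ ≤ (c-1)^(p-1) * (5 * r) := Nat.mul_le_mul_left _ hbig2
        _ = 5 * (r * (c-1)^(p-1)) := by ring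
    rw [← hsplitR, hfilter]
    omega
  -- budget from convexity
  have hbudget : (c-1)^p + 2 * (r * (c-1)^(p-1)) ≤ (n-1)^p := by
    have h1 : c - 1 ≤ n - 1 := by omega
    have hpl := pow_lin p (by omega : 1 ≤ p) h1
    have h2 : n - 1 - (c - 1) = r := by omega
    rw [h2] at hpl
    have h3 : 2 * (r * (c-1)^(p-1)) ≤ p * r * (c-1)^(p-1) := by
      calc 2 * (r * (c-1)^(p-1)) ≤ p * (r * (c-1)^(p-1)) :=
            Nat.mul_le_mul_right _ hp
        _ = p * r * (c-1)^(p-1) := by ring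
    omega
  -- conclude r = 0
  have e3 := hCssum
  have e4 : (nb G a).card ^ p ≤ (c-1)^p := Nat.pow_le_pow_left hdegaC p
  have e5 : (nb G b).card ^ p ≤ (c-1)^p := Nat.pow_le_pow_left hdegbC p
  have e7 : c - 2 ≤ n - 2 := by omega
  have e8 : (c-2) * 2^p ≤ (n-2) * 2^p := Nat.mul_le_mul_right _ e7
  have e9 : 2*(c-1)^p + 4 * (r * (c-1)^(p-1)) ≤ 2*(n-1)^p := by
    have := hbudget
    omega
  have hcpos : 1 ≤ (c-1)^(p-1) := Nat.one_le_pow _ _ (by omega)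
  have hr0 : r = 0 := by
    by_contra hrne
    have hrpos : 1 ≤ r := by omega
    have h8 : 4 * (r * (c-1)^(p-1)) ≤ ∑ v ∈ R, (nb G v).card ^ p := by omega
    have h9 := hRsum
    have h10 : 1 ≤ r * (c-1)^(p-1) := by
      calc 1 = 1 * 1 := by ring
        _ ≤ r * (c-1)^(p-1) := Nat.mul_le_mul hrpos hcpos
    omega
  -- hence Cs = univ
  have hCuniv : ∀ x : Fin n, x ∈ Cs := by
    intro x
    by_contra hx
    have hxR : x ∈ R := Finset.mem_sdiff.2 ⟨Finset.mem_univ x, hx⟩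
    have := Finset.card_pos.2 ⟨x, hxR⟩
    omega
  have hcn : c = n := by omega
  have hRempty : R = ∅ := Finset.card_eq_zero.1 (by omega)
  have hRzero : ∑ v ∈ R, (nb G v).card ^ p = 0 := by
    rw [hRempty]
    simp
  have hea : (nb G a).card ^ p ≤ (n-1)^p := Nat.pow_le_pow_left (nb_card_le G a) p
  have heb : (nb G b).card ^ p ≤ (n-1)^p := Nat.pow_le_pow_left (nb_card_le G b) p
  -- degrees are full
  have hdan : (nb G a).card = n-1 := by
    by_contra hlt
    have h1 : (nb G a).card < n-1 := lt_of_le_of_ne (nb_card_le G a) hlt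
    have h2 : (nb G a).card ^ p < (n-1)^p := Nat.pow_lt_pow_left h1 (by omega)
    omega
  have hdbn : (nb G b).card = n-1 := by
    by_contra hlt
    have h1 : (nb G b).card < n-1 := lt_of_le_of_ne (nb_card_le G b) hlt
    have h2 : (nb G b).card ^ p < (n-1)^p := Nat.pow_lt_pow_left h1 (by omega)
    omega
  have hnba : nb G a = univ.erase a := by
    apply Finset.eq_of_subset_of_card_le
    · intro w hw
      exact Finset.mem_erase.2 ⟨(ne_of_mem_nb hw).symm, Finset.mem_univ w⟩
    · rw [Finset.card_erase_of_mem (Finset.mem_univ a), Finset.card_univ, Fintype.card_fin,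
        hdan]
  have hnbb : nb G b = univ.erase b := by
    apply Finset.eq_of_subset_of_card_le
    · intro w hw
      exact Finset.mem_erase.2 ⟨(ne_of_mem_nb hw).symm, Finset.mem_univ w⟩
    · rw [Finset.card_erase_of_mem (Finset.mem_univ b), Finset.card_univ, Fintype.card_fin,
        hdbn]
  have hadja : ∀ x : Fin n, x ≠ a → G.Adj a x := by
    intro x hx
    have : x ∈ nb G a := by
      rw [hnba]
      exact Finset.mem_erase.2 ⟨hx, Finset.mem_univ x⟩
    exact mem_nb.1 this
  have hadjb : ∀ x : Fin n, x ≠ b → G.Adj b x := by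
    intro x hx
    have : x ∈ nb G b := by
      rw [hnbb]
      exact Finset.mem_erase.2 ⟨hx, Finset.mem_univ x⟩
    exact mem_nb.1 this
  refine ⟨a, b, hab, fun x y => ⟨fun hxy => ?_, fun hor => ?_⟩⟩
  · refine ⟨G.ne_of_adj hxy, ?_⟩
    by_contra hcon
    push_neg at hcon
    obtain ⟨hxa, hxb, hya, hyb⟩ := hcon
    have hxnb : x ∈ nb G a := by
      rw [hnba]
      exact Finset.mem_erase.2 ⟨hxa, Finset.mem_univ x⟩
    exact hnoedge x y hxa hxb hya hyb (Or.inl hxnb) (mem_nb.2 hxy)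
  · obtain ⟨hne, h | h | h | h⟩ := hor
    · rw [h]
      exact hadja y (by rw [h] at hne; exact hne.symm)
    · rw [h]
      exact hadjb y (by rw [h] at hne; exact hne.symm)
    · rw [h]
      exact G.adj_symm (hadja x (by rw [h] at hne; exact hne))
    · rw [h]
      exact G.adj_symm (hadjb x (by rw [h] at hne; exact hne))

end MainStructure


lemma ep_iso {p : ℕ} {G H : SimpleGraph (Fin n)} (e : G ≃g H) : ep p G = ep p H := by
  have key : ∀ v, degp H (e.toEquiv v) = degp G v := by
    intro v
    rw [degp, degp]
    have himg : H.neighborSet (e.toEquiv v) = (e.toEquiv) '' (G.neighborSet v) := by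
      ext x
      constructor
      · intro hx
        refine ⟨e.toEquiv.symm x, ?_, by simp⟩
        simp only [SimpleGraph.neighborSet, Set.mem_setOf_eq] at *
        rw [← e.map_adj_iff]
        convert hx using 2
        · rfl
        · exact e.toEquiv.apply_symm_apply x
      · rintro ⟨y, hy, rfl⟩
        simp only [SimpleGraph.neighborSet, Set.mem_setOf_eq] at *
        exact e.map_adj_iff.2 hy
    rw [himg, Set.ncard_image_of_injective _ e.toEquiv.injective]
  calc ep p G = ∑ v, degp H (e.toEquiv v) ^ p := by
        rw [ep]; congr 1; ext v; rw [key]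
    _ = ∑ v, degp H v ^ p := Equiv.sum_comp e.toEquiv (fun v => degp H v ^ p)
    _ = ep p H := rfl


lemma HG6_adj {x y : Fin n} : (HG n 6).Adj x y ↔ x ≠ y ∧ ((x:ℕ) < 2 ∨ (y:ℕ) < 2) := by
  rw [HG, SimpleGraph.fromRel_adj]
  have h6 : ¬ Odd 6 := by decide
  simp [h6]

section HGfacts

lemma nb_HG_hub {v : Fin n} (hv : (v:ℕ) < 2) : nb (HG n 6) v = univ.erase v := by
  ext w
  simp only [mem_nb, HG6_adj, Finset.mem_erase, Finset.mem_univ, and_true]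
  constructor
  · rintro ⟨h1, _⟩; exact fun h => h1 (h ▸ rfl)
  · intro h; exact ⟨fun hh => h (hh ▸ rfl), Or.inl hv⟩

lemma nb_HG_low (hn2 : 2 ≤ n) {v : Fin n} (hv : ¬ (v:ℕ) < 2) :
    nb (HG n 6) v = {(⟨0, by omega⟩ : Fin n), ⟨1, by omega⟩} := by
  ext w
  simp only [mem_nb, HG6_adj, Finset.mem_insert, Finset.mem_singleton]
  constructor
  · rintro ⟨h1, h2 | h2⟩
    · omega
    · rcases (by omega : (w:ℕ) = 0 ∨ (w:ℕ) = 1) with h3 | h3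
      · left; exact Fin.ext h3
      · right; exact Fin.ext h3
  · rintro (rfl | rfl)
    · exact ⟨fun h => hv (by simp [h]), Or.inr (by simp)⟩
    · exact ⟨fun h => hv (by simp [h]), Or.inr (by simp)⟩

lemma ep_HG6 (p : ℕ) (hn2 : 2 ≤ n) : ep p (HG n 6) = 2*(n-1)^p + (n-2)*2^p := by
  classical
  rw [ep_eq_nb]
  rw [← Finset.sum_filter_add_sum_filter_not univ (fun v : Fin n => (v:ℕ) < 2)]
  have hfil : univ.filter (fun v : Fin n => (v:ℕ) < 2)
      = {(⟨0, by omega⟩ : Fin n), ⟨1, by omega⟩} := by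
    ext x
    simp only [Finset.mem_filter, Finset.mem_univ, true_and, Finset.mem_insert,
      Finset.mem_singleton, Fin.ext_iff]
    omega
  have h1 : ∑ v ∈ univ.filter (fun v : Fin n => (v:ℕ) < 2), (nb (HG n 6) v).card ^ p
      = 2 * (n-1)^p := by
    have : ∀ v ∈ univ.filter (fun v : Fin n => (v:ℕ) < 2), (nb (HG n 6) v).card ^ p
        = (n-1)^p := by
      intro v hv
      have hv2 := (Finset.mem_filter.1 hv).2
      rw [nb_HG_hub hv2, Finset.card_erase_of_mem (Finset.mem_univ v), Finset.card_univ,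
        Fintype.card_fin]
    rw [Finset.sum_congr rfl this, Finset.sum_const, smul_eq_mul, hfil]
    have : ({(⟨0, by omega⟩ : Fin n), ⟨1, by omega⟩} : Finset (Fin n)).card = 2 := by
      rw [Finset.card_insert_of_notMem (by simp [Fin.ext_iff]), Finset.card_singleton]
    rw [this]
  have h2 : ∑ v ∈ univ.filter (fun v : Fin n => ¬ (v:ℕ) < 2), (nb (HG n 6) v).card ^ p
      = (n-2)*2^p := by
    have hcardnb : ∀ v ∈ univ.filter (fun v : Fin n => ¬ (v:ℕ) < 2),
        (nb (HG n 6) v).card ^ p = 2^p := by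
      intro v hv
      have hv2 := (Finset.mem_filter.1 hv).2
      rw [nb_HG_low hn2 hv2]
      have : ({(⟨0, by omega⟩ : Fin n), ⟨1, by omega⟩} : Finset (Fin n)).card = 2 := by
        rw [Finset.card_insert_of_notMem (by simp [Fin.ext_iff]), Finset.card_singleton]
      rw [this]
    rw [Finset.sum_congr rfl hcardnb, Finset.sum_const, smul_eq_mul]
    congr 1
    have h3 := Finset.card_filter_add_card_filter_not
      (s := (univ : Finset (Fin n))) (p := fun v : Fin n => (v:ℕ) < 2)
    have h4 : (univ : Finset (Fin n)).card = n := by rw [Finset.card_univ, Fintype.card_fin]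
    have h5 : (univ.filter (fun v : Fin n => (v:ℕ) < 2)).card = 2 := by
      rw [hfil]
      rw [Finset.card_insert_of_notMem (by simp [Fin.ext_iff]), Finset.card_singleton]
    omega
  omega

lemma free_HG (s : ℕ) (hn2 : 2 ≤ n) : Free (broomG 6 s) (HG n 6) := by
  rintro ⟨f, hf⟩
  have hne : ∀ i j : Fin (6+s), (i:ℕ) ≠ (j:ℕ) → ((f i : Fin n):ℕ) ≠ ((f j : Fin n):ℕ) := by
    intro i j hij h
    exact hij (congrArg Fin.val (f.injective (Fin.ext h)))
  have hadj : ∀ i j : Fin (6+s), (i:ℕ) + 1 = (j:ℕ) → (j:ℕ) < 6 →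
      ((f i : Fin n):ℕ) < 2 ∨ ((f j : Fin n):ℕ) < 2 := by
    intro i j h1 h2
    have h3 : (HG n 6).Adj (f i) (f j) := by
      apply hf
      rw [broomG, SimpleGraph.fromRel_adj]
      exact ⟨fun h => by rw [h] at h1; omega, Or.inl (Or.inl ⟨h1, h2⟩)⟩
    exact (HG6_adj.1 h3).2
  have tri : ∀ x y z : ℕ, x < 2 → y < 2 → z < 2 → x ≠ y → x ≠ z → y ≠ z → False := by
    intro x y z
    omega
  have k01 := hadj ⟨0, by omega⟩ ⟨1, by omega⟩ rfl (by norm_num)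
  have k23 := hadj ⟨2, by omega⟩ ⟨3, by omega⟩ rfl (by norm_num)
  have k45 := hadj ⟨4, by omega⟩ ⟨5, by omega⟩ rfl (by norm_num)
  rcases k01 with h1 | h1 <;> rcases k23 with h2 | h2 <;> rcases k45 with h3 | h3 <;>
    exact tri _ _ _ h1 h2 h3 (hne _ _ (by norm_num)) (hne _ _ (by norm_num))
      (hne _ _ (by norm_num))

end HGfacts

lemma iso_of_structure (hn2 : 2 ≤ n) {G : SimpleGraph (Fin n)} {a b : Fin n} (hab : a ≠ b)
    (hadj : ∀ x y : Fin n, G.Adj x y ↔ (x ≠ y ∧ (x = a ∨ x = b ∨ y = a ∨ y = b))) :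
    Nonempty (G ≃g HG n 6) := by
  set z0 : Fin n := ⟨0, by omega⟩ with hz0
  set z1 : Fin n := ⟨1, by omega⟩ with hz1
  have hz01 : z0 ≠ z1 := by simp [hz0, hz1, Fin.ext_iff]
  set τ1 := Equiv.swap a z0 with hτ1
  set b1 := τ1 b with hb1def
  have hτ1a : τ1 a = z0 := Equiv.swap_apply_left a z0
  have hb1 : b1 ≠ z0 := by
    intro h
    exact hab (τ1.injective (by rw [← hτ1a] at h; exact h)).symm
  set τ2 := Equiv.swap b1 z1 with hτ2
  set σ := τ1.trans τ2 with hσ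
  have hσa : σ a = z0 := by
    have h1 : σ a = τ2 z0 := by rw [hσ]; simp [hτ1a]
    rw [h1, hτ2]
    exact Equiv.swap_apply_of_ne_of_ne (Ne.symm hb1) hz01
  have hσb : σ b = z1 := by
    have h1 : σ b = τ2 b1 := by rw [hσ]; simp [hb1def]
    rw [h1, hτ2]
    exact Equiv.swap_apply_left b1 z1
  have keya : ∀ x, σ x = z0 ↔ x = a :=
    fun x => ⟨fun h => σ.injective (h.trans hσa.symm), fun h => h ▸ hσa⟩
  have keyb : ∀ x, σ x = z1 ↔ x = b :=
    fun x => ⟨fun h => σ.injective (h.trans hσb.symm), fun h => h ▸ hσb⟩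
  have val2 : ∀ u : Fin n, ((u:ℕ) < 2) ↔ (u = z0 ∨ u = z1) := by
    intro u
    rw [hz0, hz1]
    constructor
    · intro h
      rcases (by omega : (u:ℕ) = 0 ∨ (u:ℕ) = 1) with h1 | h1
      · exact Or.inl (Fin.ext h1)
      · exact Or.inr (Fin.ext h1)
    · rintro (rfl | rfl) <;> simp
  refine ⟨⟨σ, ?_⟩⟩
  intro x y
  show (HG n 6).Adj (σ x) (σ y) ↔ G.Adj x y
  rw [HG6_adj, hadj x y, val2, val2, keya, keyb, keya, keyb,
    Function.Injective.ne_iff σ.injective]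
  tauto


/-- degree-power Turán number of the broom `B_{6,s}`. -/
theorem broom6_exDP (p s n : ℕ) (hp : 2 ≤ p) (hn : (2 * s + 12) ^ 2 < n) :
    (exDP n p (broomG 6 s) = ep p (HG n 6)) ∧
    (∀ G : SimpleGraph (Fin n), Free (broomG 6 s) G →
      (ep p G = exDP n p (broomG 6 s) ↔ Nonempty (G ≃g HG n 6))) := by
  classical
  have h144 : 144 ≤ (2*s+12)^2 := by
    have h1 : (12:ℕ)^2 ≤ (2*s+12)^2 := Nat.pow_le_pow_left (by omega) 2
    omega
  have hn2 : 2 ≤ n := by omega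
  have hepHG : ep p (HG n 6) = 2*(n-1)^p + (n-2)*2^p := ep_HG6 p hn2
  have hfreeHG : Free (broomG 6 s) (HG n 6) := free_HG s hn2
  have hub : ∀ G : SimpleGraph (Fin n), Free (broomG 6 s) G →
      ep p G ≤ 2*(n-1)^p + (n-2)*2^p := by
    intro G hG
    by_contra hc
    push_neg at hc
    obtain ⟨a, b, hab, hadj⟩ := main_structure hG hp hn (le_of_lt hc)
    obtain ⟨e⟩ := iso_of_structure hn2 hab hadj
    have hiso := ep_iso (p := p) e
    omega
  have hWmem : (2*(n-1)^p + (n-2)*2^p) ∈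
      {m | ∃ G : SimpleGraph (Fin n), Free (broomG 6 s) G ∧ ep p G = m} :=
    ⟨HG n 6, hfreeHG, hepHG⟩
  have hbdd : ∀ m ∈ {m | ∃ G : SimpleGraph (Fin n), Free (broomG 6 s) G ∧ ep p G = m},
      m ≤ 2*(n-1)^p + (n-2)*2^p := by
    rintro m ⟨G, hG, rfl⟩
    exact hub G hG
  have hsup : exDP n p (broomG 6 s) = 2*(n-1)^p + (n-2)*2^p := by
    rw [exDP]
    apply le_antisymm
    · exact csSup_le ⟨_, hWmem⟩ hbdd
    · exact le_csSup ⟨_, hbdd⟩ hWmem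
  constructor
  · rw [hsup, hepHG]
  · intro G hG
    constructor
    · intro hEq
      have hWle : 2*(n-1)^p + (n-2)*2^p ≤ ep p G := by rw [hEq, hsup]
      obtain ⟨a, b, hab, hadj⟩ := main_structure hG hp hn hWle
      exact iso_of_structure hn2 hab hadj
    · rintro ⟨e⟩
      rw [ep_iso e, hsup, hepHG]

end Paper
end

section
/- Let p ≥ 2 and let n_1, n_2 ≥ 5 with n = n_1 + n_2. Then e_p(K_1 + M_{n_1−1}) + e_p(K_1 + M_{n_2−1}) < e_p(K_1 + M_{n−1}). -/
open Finset

namespace Paper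

private lemma adj_inl' (t : ℕ) (a : Fin 1) (y : Fin 1 ⊕ Fin t) :
    (joinG (⊤ : SimpleGraph (Fin 1)) (matchG t)).Adj (Sum.inl a) y ↔ ∃ b, y = Sum.inr b := by
  cases y with
  | inl a' => simp [joinG, SimpleGraph.fromRel_adj, Subsingleton.elim a a']
  | inr b => simp [joinG, SimpleGraph.fromRel_adj]

private lemma adj_inr_inr' (t : ℕ) (b b' : Fin t) :
    (joinG (⊤ : SimpleGraph (Fin 1)) (matchG t)).Adj (Sum.inr b) (Sum.inr b') ↔
      (b : ℕ) ≠ b' ∧ (b : ℕ) / 2 = (b' : ℕ) / 2 := by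
  simp only [joinG, matchG, SimpleGraph.fromRel_adj]
  constructor
  · rintro ⟨h1, h2 | h2⟩ <;> refine ⟨by simpa [Fin.ext_iff, Sum.inr.injEq] using h1, by omega⟩
  · rintro ⟨h1, h2⟩
    exact ⟨by simp [Fin.ext_iff]; omega,
      Or.inl (by simp [SimpleGraph.fromRel_adj, Fin.ext_iff]; omega)⟩

private lemma adj_inr_inl' (t : ℕ) (b : Fin t) (a : Fin 1) :
    (joinG (⊤ : SimpleGraph (Fin 1)) (matchG t)).Adj (Sum.inr b) (Sum.inl a) := by
  simp [joinG, SimpleGraph.fromRel_adj]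

private lemma degp_inl' (t : ℕ) (a : Fin 1) :
    degp (joinG (⊤ : SimpleGraph (Fin 1)) (matchG t)) (Sum.inl a) = t := by
  have h : (joinG (⊤ : SimpleGraph (Fin 1)) (matchG t)).neighborSet (Sum.inl a)
      = Set.range (Sum.inr : Fin t → Fin 1 ⊕ Fin t) := by
    ext y
    simp [SimpleGraph.neighborSet, adj_inl', eq_comm]
  rw [degp, h, ← Set.image_univ, Set.ncard_image_of_injective _ Sum.inr_injective,
    Set.ncard_univ, Nat.card_eq_fintype_card, Fintype.card_fin]

private lemma degp_inr_aux' (t : ℕ) (b : Fin t) (m : ℕ)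
    (hm : ((b : ℕ) % 2 = 0 ∧ m = (b : ℕ) + 1) ∨ ((b : ℕ) % 2 = 1 ∧ m = (b : ℕ) - 1)) :
    degp (joinG (⊤ : SimpleGraph (Fin 1)) (matchG t)) (Sum.inr b)
      = if m < t then 2 else 1 := by
  by_cases hlt : m < t
  · have h : (joinG (⊤ : SimpleGraph (Fin 1)) (matchG t)).neighborSet (Sum.inr b)
        = {Sum.inl 0, Sum.inr ⟨m, hlt⟩} := by
      ext y
      cases y with
      | inl a =>
        simp [SimpleGraph.neighborSet, Subsingleton.elim a 0, adj_inr_inl']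
      | inr b' =>
        have hb := b.isLt
        simp only [SimpleGraph.neighborSet, Set.mem_setOf_eq, SimpleGraph.adj_comm,
          adj_inr_inr', Set.mem_insert_iff, Set.mem_singleton_iff, Sum.inr.injEq,
          Fin.ext_iff, reduceCtorEq, false_or]
        omega
    rw [degp, h, Set.ncard_pair (by simp), if_pos hlt]
  · have h : (joinG (⊤ : SimpleGraph (Fin 1)) (matchG t)).neighborSet (Sum.inr b)
        = {Sum.inl 0} := by
      ext y
      cases y with
      | inl a =>
        simp [SimpleGraph.neighborSet, Subsingleton.elim a 0, adj_inr_inl']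
      | inr b' =>
        have hb := b.isLt
        have hb' := b'.isLt
        simp only [SimpleGraph.neighborSet, Set.mem_setOf_eq, SimpleGraph.adj_comm,
          adj_inr_inr', Set.mem_singleton_iff, reduceCtorEq, iff_false, not_and]
        omega
    rw [degp, h, Set.ncard_singleton, if_neg hlt]

private lemma degp_inr' (t : ℕ) (b : Fin t) :
    degp (joinG (⊤ : SimpleGraph (Fin 1)) (matchG t)) (Sum.inr b)
      = if (if (b : ℕ) % 2 = 0 then (b : ℕ) + 1 else (b : ℕ) - 1) < t then 2 else 1 := by
  rcases Nat.mod_two_eq_zero_or_one (b : ℕ) with h | h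
  · rw [degp_inr_aux' t b ((b : ℕ) + 1) (Or.inl ⟨h, rfl⟩), if_pos h]
  · rw [if_neg (show ¬((b : ℕ) % 2 = 0) by omega),
      degp_inr_aux' t b ((b : ℕ) - 1) (Or.inr ⟨h, rfl⟩)]

private lemma sum_deg_pow' (p t : ℕ) :
    ∑ i ∈ Finset.range t, (if (if i % 2 = 0 then i + 1 else i - 1) < t then 2 ^ p else 1)
      = 2 * (t / 2) * 2 ^ p + t % 2 := by
  cases t with
  | zero => simp
  | succ s =>
    rw [Finset.sum_range_succ]
    have hmain : ∑ i ∈ Finset.range s,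
        (if (if i % 2 = 0 then i + 1 else i - 1) < s + 1 then 2 ^ p else 1) = s * 2 ^ p := by
      have hall : ∀ i ∈ Finset.range s,
          (if (if i % 2 = 0 then i + 1 else i - 1) < s + 1 then 2 ^ p else 1) = 2 ^ p := by
        intro i hi
        rw [Finset.mem_range] at hi
        rw [if_pos (by split <;> omega)]
      rw [Finset.sum_congr rfl hall, Finset.sum_const, smul_eq_mul, Finset.card_range]
    rw [hmain]
    rcases Nat.even_or_odd s with ⟨k, hk⟩ | ⟨k, hk⟩
    · subst hk
      rw [if_pos (show (k + k) % 2 = 0 by omega),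
        if_neg (show ¬(k + k + 1 < k + k + 1) by omega)]
      have h1 : (k + k + 1) / 2 = k := by omega
      have h2 : (k + k + 1) % 2 = 1 := by omega
      rw [h1, h2]; ring
    · subst hk
      rw [if_neg (show ¬((2 * k + 1) % 2 = 0) by omega),
        if_pos (show 2 * k + 1 - 1 < 2 * k + 1 + 1 by omega)]
      have h1 : (2 * k + 1 + 1) / 2 = k + 1 := by omega
      have h2 : (2 * k + 1 + 1) % 2 = 0 := by omega
      rw [h1, h2]; ring

private lemma ep_formula' (p t : ℕ) :
    ep p (joinG (⊤ : SimpleGraph (Fin 1)) (matchG t))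
      = t ^ p + (2 * (t / 2) * 2 ^ p + t % 2) := by
  rw [ep, Fintype.sum_sum_type]
  have h1 : ∑ a : Fin 1,
      degp (joinG (⊤ : SimpleGraph (Fin 1)) (matchG t)) (Sum.inl a) ^ p = t ^ p := by
    simp [degp_inl']
  have h2 : ∑ b : Fin t,
      degp (joinG (⊤ : SimpleGraph (Fin 1)) (matchG t)) (Sum.inr b) ^ p
      = 2 * (t / 2) * 2 ^ p + t % 2 := by
    have hb : ∀ b : Fin t,
        degp (joinG (⊤ : SimpleGraph (Fin 1)) (matchG t)) (Sum.inr b) ^ p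
        = (fun i : ℕ => if (if i % 2 = 0 then i + 1 else i - 1) < t then 2 ^ p else 1)
            (b : ℕ) := by
      intro b
      rw [degp_inr', apply_ite (· ^ p), one_pow]
    rw [Finset.sum_congr rfl (fun b _ => hb b),
      Fin.sum_univ_eq_sum_range
        (fun i : ℕ => if (if i % 2 = 0 then i + 1 else i - 1) < t then 2 ^ p else 1) t,
      sum_deg_pow']
  rw [h1, h2]

private lemma key_ineq' (a b : ℕ) (ha : 4 ≤ a) (hb : 4 ≤ b) :
    ∀ p, 2 ≤ p → a ^ p + b ^ p + 2 ≤ (a + b) ^ p := by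
  intro p hp
  induction p with
  | zero => omega
  | succ q ih =>
    rcases Nat.lt_or_ge q 2 with hq | hq
    · interval_cases q
      · omega
      · simp only [pow_succ, pow_one]; nlinarith
    · have h := ih (by omega)
      calc a ^ (q + 1) + b ^ (q + 1) + 2
          ≤ (a + b) * (a ^ q + b ^ q + 2) := by
            have h4 : 1 ≤ a ^ q := Nat.one_le_pow _ _ (by omega)
            have h5 : 1 ≤ b ^ q := Nat.one_le_pow _ _ (by omega)
            rw [pow_succ, pow_succ]; nlinarith
        _ ≤ (a + b) * (a + b) ^ q := Nat.mul_le_mul_left _ h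
        _ = (a + b) ^ (q + 1) := by rw [pow_succ]; ring

private lemma arith' (p a b c : ℕ) (hp : 2 ≤ p) (ha : 4 ≤ a) (hb : 4 ≤ b)
    (hc : c = a + b + 1) :
    (a ^ p + (2 * (a / 2) * 2 ^ p + a % 2)) + (b ^ p + (2 * (b / 2) * 2 ^ p + b % 2))
      < c ^ p + (2 * (c / 2) * 2 ^ p + c % 2) := by
  subst hc
  have h1 := key_ineq' a b ha hb p hp
  have h2 : (a + b) ^ p < (a + b + 1) ^ p :=
    Nat.pow_lt_pow_left (by omega) (by omega)
  have h3 : 2 * (a / 2) + 2 * (b / 2) ≤ 2 * ((a + b + 1) / 2) := by omega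
  have h4 : (2 * (a / 2) + 2 * (b / 2)) * 2 ^ p ≤ (2 * ((a + b + 1) / 2)) * 2 ^ p :=
    Nat.mul_le_mul_right _ h3
  have h5 : a % 2 + b % 2 ≤ 2 := by omega
  have h6 : a ^ p + b ^ p + (a % 2 + b % 2) ≤ (a + b) ^ p := by omega
  calc (a ^ p + (2 * (a / 2) * 2 ^ p + a % 2)) + (b ^ p + (2 * (b / 2) * 2 ^ p + b % 2))
      = (a ^ p + b ^ p + (a % 2 + b % 2)) + (2 * (a / 2) + 2 * (b / 2)) * 2 ^ p := by ring
    _ ≤ (a + b) ^ p + (2 * ((a + b + 1) / 2)) * 2 ^ p := Nat.add_le_add h6 h4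
    _ < (a + b + 1) ^ p + (2 * ((a + b + 1) / 2)) * 2 ^ p := by omega
    _ ≤ (a + b + 1) ^ p + (2 * ((a + b + 1) / 2) * 2 ^ p + (a + b + 1) % 2) := by omega

/-- superadditivity for `K₁ + M_{n-1}`. -/
theorem ep_K1M_superadd (p n₁ n₂ : ℕ) (hp : 2 ≤ p) (h1 : 5 ≤ n₁) (h2 : 5 ≤ n₂) :
    ep p (joinG (⊤ : SimpleGraph (Fin 1)) (matchG (n₁ - 1)))
      + ep p (joinG (⊤ : SimpleGraph (Fin 1)) (matchG (n₂ - 1)))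
      < ep p (joinG (⊤ : SimpleGraph (Fin 1)) (matchG (n₁ + n₂ - 1))) := by
  rw [ep_formula', ep_formula', ep_formula']
  exact arith' p (n₁ - 1) (n₂ - 1) (n₁ + n₂ - 1) hp (by omega) (by omega) (by omega)

end Paper
end

section
/- Let p ≥ 2 and ℓ ≥ 5, and let n_1, n_2 ≥ ℓ with n = n_1 + n_2. Then e_p(H(n_1,ℓ)) + e_p(H(n_2,ℓ)) < e_p(H(n,ℓ)). -/
open Finset

namespace Paper

instance (n ℓ : ℕ) : DecidableRel (HG n ℓ).Adj := fun a b =>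
  decidable_of_iff _ (SimpleGraph.fromRel_adj _ a b).symm

lemma degp_eq_card {n : ℕ} (G : SimpleGraph (Fin n)) [DecidableRel G.Adj] (v : Fin n) :
    degp G v = (univ.filter (G.Adj v)).card := by
  rw [degp, Set.ncard_eq_toFinset_card']
  congr 1; ext w; simp

lemma card_filter_lt {n b : ℕ} (hb : b < n) :
    (univ.filter (fun u : Fin n => (u : ℕ) < b)).card = b := by
  have : (univ.filter (fun u : Fin n => (u : ℕ) < b)) = Iio (⟨b, hb⟩ : Fin n) := by
    ext u; simp [Fin.lt_def]
  rw [this, Fin.card_Iio]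

lemma deg_HG {n ℓ : ℕ} (hl : 5 ≤ ℓ) (hn : ℓ ≤ n) (v : Fin n) :
    degp (HG n ℓ) v =
      if (v : ℕ) < ℓ / 2 - 1 then n - 1
      else if Odd ℓ ∧ ((v : ℕ) = ℓ / 2 - 1 ∨ (v : ℕ) = ℓ / 2) then ℓ / 2
      else ℓ / 2 - 1 := by
  have hc2 : 2 ≤ ℓ / 2 := by omega
  have hcn : ℓ / 2 < n := by omega
  have hbn : ℓ / 2 - 1 < n := by omega
  rw [degp_eq_card]
  by_cases hv : (v : ℕ) < ℓ / 2 - 1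
  · rw [if_pos hv]
    have : univ.filter ((HG n ℓ).Adj v) = univ.erase v := by
      ext u
      rw [mem_filter]
      simp only [mem_filter, mem_univ, true_and, mem_erase, HG, SimpleGraph.fromRel_adj,
        ne_eq, Fin.ext_iff, hv]
      tauto
    rw [this, card_erase_of_mem (mem_univ v), card_univ, Fintype.card_fin]
  · rw [if_neg hv]
    by_cases ho : Odd ℓ
    · by_cases hvb : (v : ℕ) = ℓ / 2 - 1
      · rw [if_pos ⟨ho, Or.inl hvb⟩]
        have : univ.filter ((HG n ℓ).Adj v) =
            insert (⟨ℓ / 2, hcn⟩ : Fin n) (univ.filter (fun u : Fin n => (u : ℕ) < ℓ / 2 - 1)) := by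
          ext u
          rw [mem_filter]
          simp only [mem_filter, mem_univ, true_and, mem_insert, HG, SimpleGraph.fromRel_adj,
            ne_eq, Fin.ext_iff, ho, true_and]
          omega
        rw [this, card_insert_of_notMem (by simp), card_filter_lt hbn]
        omega
      · by_cases hvc : (v : ℕ) = ℓ / 2
        · rw [if_pos ⟨ho, Or.inr hvc⟩]
          have : univ.filter ((HG n ℓ).Adj v) =
              univ.filter (fun u : Fin n => (u : ℕ) < ℓ / 2) := by
            ext u
            rw [mem_filter]
            simp only [mem_filter, mem_univ, true_and, HG, SimpleGraph.fromRel_adj,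
              ne_eq, Fin.ext_iff, ho, true_and]
            omega
          rw [this, card_filter_lt hcn]
        · rw [if_neg (by tauto)]
          have : univ.filter ((HG n ℓ).Adj v) =
              univ.filter (fun u : Fin n => (u : ℕ) < ℓ / 2 - 1) := by
            ext u
            rw [mem_filter]
            simp only [mem_filter, mem_univ, true_and, HG, SimpleGraph.fromRel_adj,
              ne_eq, Fin.ext_iff, ho, true_and]
            omega
          rw [this, card_filter_lt hbn]
    · rw [if_neg (by tauto)]
      have : univ.filter ((HG n ℓ).Adj v) =
          univ.filter (fun u : Fin n => (u : ℕ) < ℓ / 2 - 1) := by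
        ext u
        rw [mem_filter]
        simp only [mem_filter, mem_univ, true_and, HG, SimpleGraph.fromRel_adj,
          ne_eq, Fin.ext_iff, ho, false_and, and_false, or_false]
        omega
      rw [this, card_filter_lt hbn]

lemma ep_HG {p n ℓ : ℕ} (hl : 5 ≤ ℓ) (hn : ℓ ≤ n) :
    ep p (HG n ℓ) = (ℓ / 2 - 1) * (n - 1) ^ p +
      (if Odd ℓ then 2 * (ℓ / 2) ^ p + (n - (ℓ / 2 + 1)) * (ℓ / 2 - 1) ^ p
       else (n - (ℓ / 2 - 1)) * (ℓ / 2 - 1) ^ p) := by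
  have hc2 : 2 ≤ ℓ / 2 := by omega
  rw [ep]
  have hdeg : ∀ v : Fin n, degp (HG n ℓ) v ^ p =
      (if (v : ℕ) < ℓ / 2 - 1 then n - 1
       else if Odd ℓ ∧ ((v : ℕ) = ℓ / 2 - 1 ∨ (v : ℕ) = ℓ / 2) then ℓ / 2
       else ℓ / 2 - 1) ^ p := fun v => by rw [deg_HG hl hn]
  rw [Finset.sum_congr rfl (fun v _ => hdeg v),
    Fin.sum_univ_eq_sum_range (fun i =>
      (if i < ℓ / 2 - 1 then n - 1
       else if Odd ℓ ∧ (i = ℓ / 2 - 1 ∨ i = ℓ / 2) then ℓ / 2 else ℓ / 2 - 1) ^ p) n]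
  set b := ℓ / 2 - 1 with hb
  set c := ℓ / 2 with hc
  by_cases ho : Odd ℓ
  · rw [if_pos ho]
    have hsplit : range n = Ico 0 b ∪ Ico b (b + 2) ∪ Ico (b + 2) n := by
      rw [Finset.Ico_union_Ico_eq_Ico (by omega) (by omega),
        Finset.Ico_union_Ico_eq_Ico (by omega) (by omega), range_eq_Ico]
    have hon : ℓ = 2 * c + 1 := by
      obtain ⟨t, ht⟩ := ho; omega
    rw [hsplit, Finset.sum_union (by
        rw [Finset.disjoint_left]; intro a ha hb'
        simp only [Finset.mem_union, mem_Ico] at ha hb'; omega),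
      Finset.sum_union (by
        rw [Finset.disjoint_left]; intro a ha hb'
        simp only [mem_Ico] at ha hb'; omega)]
    have hcb : c = b + 1 := by omega
    rw [Finset.sum_const_nat (m := (n - 1) ^ p) (fun i hi => by
        rw [mem_Ico] at hi; rw [if_pos hi.2]),
      Finset.sum_const_nat (m := c ^ p) (fun i hi => by
        rw [mem_Ico] at hi
        rw [if_neg (by omega), if_pos ⟨ho, by omega⟩]),
      Finset.sum_const_nat (m := b ^ p) (fun i hi => by
        rw [mem_Ico] at hi
        rw [if_neg (by omega), if_neg (by push_neg; exact fun _ => by omega)]),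
      Nat.card_Ico, Nat.card_Ico, Nat.card_Ico]
    have e1 : b - 0 = b := by omega
    have e2 : b + 2 - b = 2 := by omega
    have e3 : n - (b + 2) = n - (c + 1) := by omega
    rw [e1, e2, e3, add_assoc]
  · rw [if_neg ho]
    have hsplit : range n = Ico 0 b ∪ Ico b n := by
      rw [Finset.Ico_union_Ico_eq_Ico (by omega) (by omega), range_eq_Ico]
    rw [hsplit, Finset.sum_union (by
        rw [Finset.disjoint_left]; intro a ha hb'
        simp only [mem_Ico] at ha hb'; omega)]
    rw [Finset.sum_const_nat (m := (n - 1) ^ p) (fun i hi => by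
        rw [mem_Ico] at hi; rw [if_pos hi.2]),
      Finset.sum_const_nat (m := b ^ p) (fun i hi => by
        rw [mem_Ico] at hi
        rw [if_neg (by omega), if_neg (by exact fun h => ho h.1)]),
      Nat.card_Ico, Nat.card_Ico]
    have e1 : b - 0 = b := by omega
    rw [e1]

lemma key_even {p x y : ℕ} (hp : 2 ≤ p) (hx : 1 ≤ x) (hy : 1 ≤ y) :
    x ^ p + y ^ p < (x + y + 1) ^ p :=
  calc x ^ p + y ^ p ≤ (x + y) ^ p :=
        pow_add_pow_le (by positivity) (by positivity) (by omega)
    _ < (x + y + 1) ^ p := Nat.pow_lt_pow_left (by omega) (by omega)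

lemma key_odd {p b x y : ℕ} (hp : 2 ≤ p) (hb : 1 ≤ b)
    (hx : 2 * b + 2 ≤ x) (hy : 2 * b + 2 ≤ y) :
    b * x ^ p + b * y ^ p + 2 * (b + 1) ^ p < b * (x + y + 1) ^ p := by
  obtain ⟨q, rfl⟩ : ∃ q, p = q + 2 := ⟨p - 2, by omega⟩
  set s := x + y + 1 with hs
  have h1 : x ^ (q + 2) + y ^ (q + 2) + s ^ (q + 1) ≤ s ^ (q + 2) := by
    have hx1 : x ^ (q + 1) ≤ s ^ (q + 1) := Nat.pow_le_pow_left (by omega) _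
    have hy1 : y ^ (q + 1) ≤ s ^ (q + 1) := Nat.pow_le_pow_left (by omega) _
    calc x ^ (q + 2) + y ^ (q + 2) + s ^ (q + 1)
        = x ^ (q + 1) * x + y ^ (q + 1) * y + s ^ (q + 1) := by ring
      _ ≤ s ^ (q + 1) * x + s ^ (q + 1) * y + s ^ (q + 1) :=
          Nat.add_le_add (Nat.add_le_add (Nat.mul_le_mul_right _ hx1)
            (Nat.mul_le_mul_right _ hy1)) le_rfl
      _ = s ^ (q + 2) := by rw [hs]; ring
  have h2 : 2 * (b + 1) ^ (q + 2) < b * s ^ (q + 1) := by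
    have hbig : (4 * b + 5) ^ (q + 1) ≤ s ^ (q + 1) := Nat.pow_le_pow_left (by omega) _
    have hmid : (b + 1) ^ q * (4 * b + 5) ≤ (4 * b + 5) ^ (q + 1) := by
      calc (b + 1) ^ q * (4 * b + 5) ≤ (4 * b + 5) ^ q * (4 * b + 5) :=
            Nat.mul_le_mul_right _ (Nat.pow_le_pow_left (by omega) _)
        _ = (4 * b + 5) ^ (q + 1) := (pow_succ _ _).symm
    have hcore : 2 * (b + 1) ^ (q + 2) < b * ((b + 1) ^ q * (4 * b + 5)) := by
      have hpow : 0 < (b + 1) ^ q := pow_pos (by omega) q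
      have hlt : 2 * (b + 1) ^ 2 < b * (4 * b + 5) := by nlinarith
      calc 2 * (b + 1) ^ (q + 2) = (b + 1) ^ q * (2 * (b + 1) ^ 2) := by ring
        _ < (b + 1) ^ q * (b * (4 * b + 5)) := mul_lt_mul_of_pos_left hlt hpow
        _ = b * ((b + 1) ^ q * (4 * b + 5)) := by ring
    calc 2 * (b + 1) ^ (q + 2) < b * ((b + 1) ^ q * (4 * b + 5)) := hcore
      _ ≤ b * (4 * b + 5) ^ (q + 1) := Nat.mul_le_mul_left _ hmid
      _ ≤ b * s ^ (q + 1) := Nat.mul_le_mul_left _ hbig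
  calc b * x ^ (q + 2) + b * y ^ (q + 2) + 2 * (b + 1) ^ (q + 2)
      < b * x ^ (q + 2) + b * y ^ (q + 2) + b * s ^ (q + 1) := by omega
    _ = b * (x ^ (q + 2) + y ^ (q + 2) + s ^ (q + 1)) := by ring
    _ ≤ b * s ^ (q + 2) := Nat.mul_le_mul_left _ h1

/-- superadditivity for `H(n, ℓ)`. -/
theorem ep_HG_superadd (p ℓ n₁ n₂ : ℕ) (hp : 2 ≤ p) (hl : 5 ≤ ℓ)
    (h1 : ℓ ≤ n₁) (h2 : ℓ ≤ n₂) :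
    ep p (HG n₁ ℓ) + ep p (HG n₂ ℓ) < ep p (HG (n₁ + n₂) ℓ) := by
  rw [ep_HG hl h1, ep_HG hl h2, ep_HG hl (by omega : ℓ ≤ n₁ + n₂)]
  by_cases ho : Odd ℓ
  · obtain ⟨k, rfl⟩ : ∃ k, ℓ = 2 * k + 5 := by
      obtain ⟨t, ht⟩ := ho; exact ⟨t - 2, by omega⟩
    have hdiv : (2 * k + 5) / 2 = k + 2 := by omega
    simp only [if_pos ho, hdiv]
    have e0 : k + 2 - 1 = k + 1 := by omega
    rw [e0]
    have key : (k + 1) * (n₁ - 1) ^ p + (k + 1) * (n₂ - 1) ^ p + 2 * (k + 1 + 1) ^ p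
        < (k + 1) * ((n₁ - 1) + (n₂ - 1) + 1) ^ p :=
      key_odd hp (by omega) (by omega) (by omega)
    have e1 : (n₁ - 1) + (n₂ - 1) + 1 = n₁ + n₂ - 1 := by omega
    have e2 : k + 1 + 1 = k + 2 := by omega
    rw [e1, e2] at key
    have aux : (n₁ - (k + 2 + 1)) * (k + 1) ^ p + (n₂ - (k + 2 + 1)) * (k + 1) ^ p
        ≤ (n₁ + n₂ - (k + 2 + 1)) * (k + 1) ^ p := by
      rw [← add_mul]
      exact Nat.mul_le_mul_right _ (by omega)
    linarith [key, aux]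
  · obtain ⟨k, rfl⟩ : ∃ k, ℓ = 2 * k + 6 := by
      rw [Nat.not_odd_iff_even] at ho; obtain ⟨t, ht⟩ := ho; exact ⟨t - 3, by omega⟩
    have hdiv : (2 * k + 6) / 2 = k + 3 := by omega
    simp only [if_neg ho, hdiv]
    have e0 : k + 3 - 1 = k + 2 := by omega
    rw [e0]
    have key : (n₁ - 1) ^ p + (n₂ - 1) ^ p < ((n₁ - 1) + (n₂ - 1) + 1) ^ p :=
      key_even hp (by omega) (by omega)
    have key2 : (k + 2) * ((n₁ - 1) ^ p + (n₂ - 1) ^ p)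
        < (k + 2) * (((n₁ - 1) + (n₂ - 1) + 1) ^ p) :=
      mul_lt_mul_of_pos_left key (by omega)
    have e1 : (n₁ - 1) + (n₂ - 1) + 1 = n₁ + n₂ - 1 := by omega
    rw [e1] at key2
    have aux : (n₁ - (k + 2)) * (k + 2) ^ p + (n₂ - (k + 2)) * (k + 2) ^ p
        ≤ (n₁ + n₂ - (k + 2)) * (k + 2) ^ p := by
      rw [← add_mul]
      exact Nat.mul_le_mul_right _ (by omega)
    have hmul : (k + 2) * ((n₁ - 1) ^ p + (n₂ - 1) ^ p)
        = (k + 2) * (n₁ - 1) ^ p + (k + 2) * (n₂ - 1) ^ p := by ring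
    rw [hmul] at key2
    linarith [key2, aux]

end Paper
end

section
/- Let p ≥ 2, s ≥ 0, ℓ ≥ 5, and let d be an integer (depending only on ℓ and s). Let G* be a graph on h* > 0 vertices with maximum degree Δ(G*) ≤ d, and let n = h + h* > (ℓ + s + d)^2 for some h ≥ ℓ. Then e_p(H(h,ℓ)) + e_p(G*) < e_p(H(n,ℓ)). -/
open Finset

namespace Paper

def D (n ℓ i : ℕ) : ℕ :=
  if i < ℓ/2-1 then n-1
  else (ℓ/2-1) + (if Odd ℓ ∧ (i = ℓ/2-1 ∨ i = ℓ/2) then 1 else 0)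

lemma ncard_lt_set (n b : ℕ) (hb : b ≤ n) : {j : Fin n | (j:ℕ) < b}.ncard = b := by
  have : {j : Fin n | (j:ℕ) < b} = Set.range (Fin.castLE hb) := by
    ext j
    simp only [Set.mem_setOf_eq, Set.mem_range]
    constructor
    · intro hj; exact ⟨⟨j, hj⟩, by ext; simp⟩
    · rintro ⟨a, rfl⟩; exact a.2
  rw [this, ← Set.image_univ, Set.ncard_image_of_injective _ (Fin.castLE_injective hb),
    Set.ncard_univ]
  simp

lemma HG_adj (n ℓ : ℕ) (i j : Fin n) : (HG n ℓ).Adj i j ↔ (i:ℕ) ≠ (j:ℕ) ∧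
    (((i:ℕ) < ℓ/2-1 ∨ (Odd ℓ ∧ (i:ℕ)=ℓ/2-1 ∧ (j:ℕ)=ℓ/2)) ∨
     ((j:ℕ) < ℓ/2-1 ∨ (Odd ℓ ∧ (j:ℕ)=ℓ/2-1 ∧ (i:ℕ)=ℓ/2))) := by
  rw [HG, SimpleGraph.fromRel_adj, Fin.ne_iff_vne]

lemma degp_HG (n ℓ : ℕ) (hl : 5 ≤ ℓ) (hn : ℓ ≤ n) (i : Fin n) :
    degp (HG n ℓ) i = D n ℓ (i:ℕ) := by
  have hb2 : ℓ/2 - 1 + 2 ≤ n := by omega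
  unfold degp D
  by_cases hib : (i:ℕ) < ℓ/2-1
  · have hset : (HG n ℓ).neighborSet i = {i}ᶜ := by
      ext j
      simp only [SimpleGraph.mem_neighborSet, HG_adj, Set.mem_compl_iff,
        Set.mem_singleton_iff]
      constructor
      · rintro ⟨hne, -⟩ he; exact hne (by rw [he])
      · intro h; exact ⟨fun he => h (Fin.ext he.symm), Or.inl (Or.inl hib)⟩
    rw [hset, if_pos hib, Set.ncard_eq_toFinset_card']
    simp [Finset.card_compl]
  · rw [if_neg hib]
    by_cases hodd : Odd ℓ
    · rcases eq_or_ne (i:ℕ) (ℓ/2-1) with hi | hi1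
      · have hset : (HG n ℓ).neighborSet i =
            insert (⟨ℓ/2, by omega⟩ : Fin n) {j : Fin n | (j:ℕ) < ℓ/2-1} := by
          ext j
          simp only [SimpleGraph.mem_neighborSet, HG_adj, Set.mem_insert_iff,
            Set.mem_setOf_eq, Fin.ext_iff, hodd, true_and]
          omega
        rw [hset, Set.ncard_insert_of_notMem (by simp) (Set.toFinite _),
          ncard_lt_set n _ (by omega)]
        rw [if_pos ⟨hodd, Or.inl hi⟩]
      · rcases eq_or_ne (i:ℕ) (ℓ/2) with hi | hi2
        · have hset : (HG n ℓ).neighborSet i =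
              insert (⟨ℓ/2-1, by omega⟩ : Fin n) {j : Fin n | (j:ℕ) < ℓ/2-1} := by
            ext j
            simp only [SimpleGraph.mem_neighborSet, HG_adj, Set.mem_insert_iff,
              Set.mem_setOf_eq, Fin.ext_iff, hodd, true_and]
            omega
          rw [hset, Set.ncard_insert_of_notMem (by simp) (Set.toFinite _),
            ncard_lt_set n _ (by omega)]
          rw [if_pos ⟨hodd, Or.inr hi⟩]
        · have hset : (HG n ℓ).neighborSet i = {j : Fin n | (j:ℕ) < ℓ/2-1} := by
            ext j
            simp only [SimpleGraph.mem_neighborSet, HG_adj, Set.mem_setOf_eq, hodd, true_and]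
            omega
          rw [hset, ncard_lt_set n _ (by omega), if_neg (by tauto)]
          omega
    · have hset : (HG n ℓ).neighborSet i = {j : Fin n | (j:ℕ) < ℓ/2-1} := by
        ext j
        simp only [SimpleGraph.mem_neighborSet, HG_adj, Set.mem_setOf_eq, hodd, false_and,
          or_false, false_or]
        omega
      rw [hset, ncard_lt_set n _ (by omega), if_neg (by tauto)]
      omega

lemma ep_HG_s10 (p n ℓ : ℕ) (hl : 5 ≤ ℓ) (hn : ℓ ≤ n) :
    ep p (HG n ℓ) = ∑ i ∈ Finset.range n, D n ℓ i ^ p := by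
  unfold ep
  rw [← Fin.sum_univ_eq_sum_range (fun i => D n ℓ i ^ p) n]
  exact Finset.sum_congr rfl fun i _ => by rw [degp_HG n ℓ hl hn]

lemma key_arith (p c d x hstar b : ℕ) (hp : 2 ≤ p) (hb : 1 ≤ b) (hpos : 0 < hstar)
    (hd : d < c) (hN : c^2 ≤ x + hstar) :
    hstar * d^p + b*x^p < b*(x+hstar)^p := by
  set N := x + hstar with hNdef
  have hc1 : 1 ≤ c := by omega
  have h1 : N^p = N^(p-1)*x + N^(p-1)*hstar := by
    rw [← Nat.mul_add, ← hNdef.symm, ← pow_succ]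
    congr 1
    omega
  have h3 : x^p ≤ N^(p-1)*x := by
    calc x^p = x^(p-1)*x := by rw [← pow_succ]; congr 1; omega
    _ ≤ N^(p-1)*x := Nat.mul_le_mul_right x (Nat.pow_le_pow_left (by omega) _)
  have h5 : d^p < N^(p-1) := by
    calc d^p < c^p := Nat.pow_lt_pow_left hd (by omega)
    _ ≤ c^(2*(p-1)) := Nat.pow_le_pow_right hc1 (by omega)
    _ = (c^2)^(p-1) := by rw [pow_mul]
    _ ≤ N^(p-1) := Nat.pow_le_pow_left hN _
  calc hstar * d^p + b*x^p < hstar * N^(p-1) + b*(N^(p-1)*x) := by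
        have := (Nat.mul_lt_mul_left hpos).mpr h5
        have := Nat.mul_le_mul_left b h3
        omega
  _ ≤ b*(N^(p-1)*hstar) + b*(N^(p-1)*x) := by
        have : hstar * N^(p-1) ≤ b*(N^(p-1)*hstar) := by
          calc hstar * N^(p-1) = 1*(N^(p-1)*hstar) := by ring
          _ ≤ b*(N^(p-1)*hstar) := Nat.mul_le_mul_right _ hb
        omega
  _ = b*N^p := by rw [h1]; ring

/-- absorbing a bounded-degree part, general `ℓ ≥ 5`. -/
theorem ep_HG_absorb (p s ℓ d h hstar : ℕ) (hp : 2 ≤ p) (hl : 5 ≤ ℓ) (hh : ℓ ≤ h)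
    (hpos : 0 < hstar) {W : Type*} [Fintype W] (Gstar : SimpleGraph W)
    (hcard : Fintype.card W = hstar) (hdeg : ∀ w, degp Gstar w ≤ d)
    (hn : (ℓ + s + d) ^ 2 < h + hstar) :
    ep p (HG h ℓ) + ep p Gstar < ep p (HG (h + hstar) ℓ) := by
  have hb : 1 ≤ ℓ/2-1 := by omega
  have e1 : ep p (HG h ℓ) = ∑ i ∈ Finset.range h, D h ℓ i ^ p := ep_HG_s10 p h ℓ hl hh
  have e2 : ep p (HG (h+hstar) ℓ) =
      (∑ i ∈ Finset.range h, D (h+hstar) ℓ i ^ p) + hstar * (ℓ/2-1)^p := by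
    rw [ep_HG_s10 p _ ℓ hl (by omega), Finset.sum_range_add]
    congr 1
    have hD : ∀ i ∈ Finset.range hstar, D (h+hstar) ℓ (h+i) ^ p = (ℓ/2-1)^p := by
      intro i _
      have : D (h+hstar) ℓ (h+i) = ℓ/2-1 := by
        unfold D
        rw [if_neg (by omega), if_neg (by rintro ⟨-, hc⟩; omega)]
        omega
      rw [this]
    rw [Finset.sum_congr rfl hD, Finset.sum_const, Finset.card_range, smul_eq_mul]
  have hite : ∀ X : ℕ, ∑ i ∈ Finset.range h, (if i < ℓ/2-1 then X else 0) = (ℓ/2-1) * X := by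
    intro X
    have hh2 : h = (ℓ/2-1) + (h - (ℓ/2-1)) := by omega
    rw [hh2, Finset.sum_range_add]
    have h1 : ∑ i ∈ Finset.range (ℓ/2-1), (if i < ℓ/2-1 then X else 0) = (ℓ/2-1) * X := by
      rw [Finset.sum_congr rfl fun i hi => if_pos (Finset.mem_range.mp hi),
        Finset.sum_const, Finset.card_range, smul_eq_mul]
    have h2 : ∑ i ∈ Finset.range (h-(ℓ/2-1)), (if (ℓ/2-1)+i < ℓ/2-1 then X else 0) = 0 :=
      Finset.sum_eq_zero fun i _ => if_neg (by omega)
    omega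
  have e3 : (∑ i ∈ Finset.range h, D h ℓ i ^ p) + (ℓ/2-1) * (h+hstar-1)^p
      = (∑ i ∈ Finset.range h, D (h+hstar) ℓ i ^ p) + (ℓ/2-1) * (h-1)^p := by
    have key : ∀ i ∈ Finset.range h,
        D h ℓ i ^ p + (if i < ℓ/2-1 then (h+hstar-1)^p else 0)
        = D (h+hstar) ℓ i ^ p + (if i < ℓ/2-1 then (h-1)^p else 0) := by
      intro i _
      unfold D
      by_cases hib : i < ℓ/2-1
      · simp only [if_pos hib]
        omega
      · simp only [if_neg hib]
    calc (∑ i ∈ Finset.range h, D h ℓ i ^ p) + (ℓ/2-1) * (h+hstar-1)^p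
        = ∑ i ∈ Finset.range h,
            (D h ℓ i ^ p + (if i < ℓ/2-1 then (h+hstar-1)^p else 0)) := by
          rw [Finset.sum_add_distrib, hite]
      _ = ∑ i ∈ Finset.range h,
            (D (h+hstar) ℓ i ^ p + (if i < ℓ/2-1 then (h-1)^p else 0)) :=
          Finset.sum_congr rfl key
      _ = _ := by rw [Finset.sum_add_distrib, hite]
  have e4 : ep p Gstar ≤ hstar * d^p := by
    unfold ep
    calc ∑ w : W, degp Gstar w ^ p ≤ ∑ _w : W, d^p :=
          Finset.sum_le_sum fun w _ => Nat.pow_le_pow_left (hdeg w) p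
      _ = hstar * d^p := by
          rw [Finset.sum_const, Finset.card_univ, hcard, smul_eq_mul]
  have e5 : hstar * d^p + (ℓ/2-1)*(h-1)^p < (ℓ/2-1)*(h+hstar-1)^p := by
    have := key_arith p (ℓ+s+d) d (h-1) hstar (ℓ/2-1) hp hb hpos (by omega) (by omega)
    have hx : h-1+hstar = h+hstar-1 := by omega
    rwa [hx] at this
  rw [e1, e2]
  generalize hA : (ℓ/2-1) * (h+hstar-1)^p = A at e3 e5
  generalize hB : (ℓ/2-1) * (h-1)^p = B at e3 e5
  generalize hC : hstar * d^p = C at e4 e5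
  generalize hE : hstar * (ℓ/2-1)^p = E
  generalize hS1 : (∑ i ∈ Finset.range h, D h ℓ i ^ p) = S1 at e3 ⊢
  generalize hS2 : (∑ i ∈ Finset.range h, D (h+hstar) ℓ i ^ p) = S2 at e3 ⊢
  omega


end Paper
end

section
/- Let p ≥ 2, s ≥ 0, ℓ ≥ 5. Let C be a connected B_{ℓ,s}-free graph and v ∈ V(C) with d_C(v) = Δ(C) ≥ ℓ + s − 1. Suppose e = xy is an x-pendent edge of C with x,y ∈ V(C)∖{v}, and let C' be the graph obtained from C by deleting the edge xy and adding the edge vy. Then C' is B_{ℓ,s}-free, d_{C'}(v) = Δ(C') ≥ ℓ + s − 1, and e_p(C) < e_p(C'). -/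
open Finset

namespace Paper

lemma convex_aux (p : ℕ) (hp : 2 ≤ p) : ∀ u : ℕ, 2 * (u + 1) ^ p < (u + 2) ^ p + u ^ p := by
  induction p, hp using Nat.le_induction with
  | base => intro u; ring_nf; omega
  | succ p hp ih =>
    intro u
    have h1 := ih u
    have h2 : u ^ p ≤ (u + 2) ^ p := Nat.pow_le_pow_left (by omega) p
    have e1 : (u + 2) ^ (p + 1) = (u + 2) ^ p * (u + 2) := pow_succ _ _
    have e2 : u ^ (p + 1) = u ^ p * u := pow_succ _ _
    have e3 : (u + 1) ^ (p + 1) = (u + 1) ^ p * (u + 1) := pow_succ _ _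
    nlinarith [h1, h2]

lemma slope_aux (p : ℕ) (hp : 2 ≤ p) :
    ∀ a c : ℕ, c < a → a ^ p + (c + 1) ^ p < (a + 1) ^ p + c ^ p := by
  intro a
  induction a with
  | zero => intro c hc; omega
  | succ a ih =>
    intro c hc
    show (a + 1) ^ p + (c + 1) ^ p < (a + 2) ^ p + c ^ p
    rcases Nat.lt_or_ge c a with h | h
    · have h1 := ih c h
      have h2 := convex_aux p hp a
      have : a + 2 = a + 1 + 1 := rfl
      omega
    · have : c = a := by omega
      subst this
      have h2 := convex_aux p hp c
      omega

/-- pendent edge operation. -/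
theorem pendentEdge_op (p s ℓ : ℕ) (hp : 2 ≤ p) (hl : 5 ≤ ℓ)
    {V : Type*} [Fintype V] (C : SimpleGraph V) (hconn : C.Connected)
    (hfree : Free (broomG ℓ s) C) (v x y : V)
    (hmax : ∀ w, degp C w ≤ degp C v) (hdegv : ℓ + s - 1 ≤ degp C v)
    (hxv : x ≠ v) (hyv : y ≠ v) (hxy : C.Adj x y)
    (hpend : ∀ w, C.Adj w y → w = x)
    (C' : SimpleGraph V)
    (hC' : C' = C.deleteEdges {s(x, y)} ⊔ SimpleGraph.fromEdgeSet {s(v, y)}) :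
    Free (broomG ℓ s) C' ∧ (∀ w, degp C' w ≤ degp C' v) ∧
      ℓ + s - 1 ≤ degp C' v ∧ ep p C < ep p C' := by
  classical
  have hxyne : x ≠ y := hxy.ne
  have hvy : ¬ C.Adj v y := fun h => hxv (hpend v h).symm
  have hadj : ∀ u w, C'.Adj u w ↔
      (C.Adj u w ∧ ¬(u = x ∧ w = y) ∧ ¬(u = y ∧ w = x)) ∨
      ((u = v ∧ w = y) ∨ (u = y ∧ w = v)) := by
    subst hC'
    intro u w
    simp only [SimpleGraph.sup_adj, SimpleGraph.deleteEdges_adj, Set.mem_singleton_iff,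
      SimpleGraph.fromEdgeSet_adj, Sym2.eq_iff]
    constructor
    · rintro (⟨h1, h2⟩ | ⟨h, _⟩)
      · exact Or.inl ⟨h1, by tauto⟩
      · exact Or.inr h
    · rintro (⟨h1, h2, h3⟩ | (⟨rfl, rfl⟩ | ⟨rfl, rfl⟩))
      · exact Or.inl ⟨h1, by tauto⟩
      · exact Or.inr ⟨Or.inl ⟨rfl, rfl⟩, Ne.symm hyv⟩
      · exact Or.inr ⟨Or.inr ⟨rfl, rfl⟩, hyv⟩
  -- Freeness of C'
  have hfree' : Free (broomG ℓ s) C' := by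
    rintro ⟨f, hf⟩
    by_cases hb : ∃ a b, (broomG ℓ s).Adj a b ∧ f a = v ∧ f b = y
    · obtain ⟨a, b, hab, hfa, hfb⟩ := hb
      have hanb : a ≠ b := hab.ne
      have huniq : ∀ c, (broomG ℓ s).Adj c b → c = a := by
        intro c hc
        have h := hf c b hc
        rw [hfb] at h
        rcases (hadj _ _).1 h with ⟨h1, h2, _⟩ | (⟨h1, _⟩ | ⟨_, h2⟩)
        · exact absurd ⟨hpend (f c) h1, rfl⟩ h2
        · exact f.injective (h1.trans hfa.symm)
        · exact absurd h2 hyv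
      set S : Set V := f '' {c | c ≠ b} with hS
      have hSfin : S.Finite := Set.toFinite _
      have hScard : S.ncard = ℓ + s - 1 := by
        rw [hS, Set.ncard_image_of_injective _ f.injective]
        have he : ({c | c ≠ b} : Set (Fin (ℓ + s))) = Set.univ \ {b} := by
          ext c; simp
        rw [he, Set.ncard_diff_singleton_of_mem (Set.mem_univ _), Set.ncard_univ]
        simp
      have hvS : v ∈ S := ⟨a, hanb, hfa⟩
      have hexz : ∃ z, C.Adj v z ∧ z ∉ S := by
        by_contra hcon
        push_neg at hcon
        have hsub : C.neighborSet v ⊆ S \ {v} := by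
          intro z hz
          exact ⟨hcon z hz, by rintro rfl; exact C.irrefl hz⟩
        have h1 : (C.neighborSet v).ncard ≤ (S \ {v}).ncard :=
          Set.ncard_le_ncard hsub hSfin.diff
        have h2 : (S \ {v}).ncard = ℓ + s - 1 - 1 := by
          rw [Set.ncard_diff_singleton_of_mem hvS, hScard]
        have h3 : ℓ + s - 1 ≤ (C.neighborSet v).ncard := hdegv
        omega
      obtain ⟨z, hz, hzS⟩ := hexz
      have hzf : ∀ c, c ≠ b → f c ≠ z := fun c hc h => hzS ⟨c, hc, h⟩
      set g : Fin (ℓ + s) → V := fun c => if c = b then z else f c with hg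
      have hginj : Function.Injective g := by
        intro c d h
        simp only [hg] at h
        by_cases hc : c = b <;> by_cases hd : d = b
        · rw [hc, hd]
        · rw [if_pos hc, if_neg hd] at h; exact absurd h.symm (hzf d hd)
        · rw [if_neg hc, if_pos hd] at h; exact absurd h (hzf c hc)
        · rw [if_neg hc, if_neg hd] at h; exact f.injective h
      apply hfree
      refine ⟨⟨g, hginj⟩, ?_⟩
      intro c d hcd
      simp only [Function.Embedding.coeFn_mk, hg]
      by_cases hc : c = b <;> by_cases hd : d = b
      · subst hc; subst hd; exact absurd rfl hcd.ne
      · subst hc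
        have hd' : d = a := huniq d hcd.symm
        rw [if_pos rfl, if_neg hd, hd', hfa]
        exact hz.symm
      · subst hd
        have hc' : c = a := huniq c hcd
        rw [if_pos rfl, if_neg hc, hc', hfa]
        exact hz
      · rw [if_neg hc, if_neg hd]
        rcases (hadj _ _).1 (hf c d hcd) with ⟨h1, _, _⟩ | (⟨_, h2⟩ | ⟨h2, _⟩)
        · exact h1
        · exact absurd (f.injective (h2.trans hfb.symm)) hd
        · exact absurd (f.injective (h2.trans hfb.symm)) hc
    · apply hfree
      refine ⟨f, ?_⟩
      intro a b hab
      rcases (hadj _ _).1 (hf a b hab) with ⟨h1, _, _⟩ | (⟨h1, h2⟩ | ⟨h1, h2⟩)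
      · exact h1
      · exact absurd ⟨a, b, hab, h1, h2⟩ hb
      · exact absurd ⟨b, a, hab.symm, h2, h1⟩ hb
  -- Neighbor sets
  have hNy : C.neighborSet y = {x} := by
    ext u
    simp only [SimpleGraph.mem_neighborSet, Set.mem_singleton_iff]
    exact ⟨fun h => hpend u h.symm, fun h => h ▸ hxy.symm⟩
  have hNy' : C'.neighborSet y = {v} := by
    ext u
    simp only [SimpleGraph.mem_neighborSet, Set.mem_singleton_iff]
    rw [hadj]
    constructor
    · rintro (⟨h1, _, h3⟩ | (⟨h1, _⟩ | ⟨_, h2⟩))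
      · exact absurd ⟨rfl, hpend u h1.symm⟩ h3
      · exact absurd h1 hyv
      · exact h2
    · rintro rfl; exact Or.inr (Or.inr ⟨rfl, rfl⟩)
  have hNv' : C'.neighborSet v = insert y (C.neighborSet v) := by
    ext u
    simp only [SimpleGraph.mem_neighborSet, Set.mem_insert_iff]
    rw [hadj]
    constructor
    · rintro (⟨h1, _, _⟩ | (⟨_, h2⟩ | ⟨h1, _⟩))
      · exact Or.inr h1
      · exact Or.inl h2
      · exact absurd h1.symm hyv
    · rintro (rfl | h)
      · exact Or.inr (Or.inl ⟨rfl, rfl⟩)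
      · exact Or.inl ⟨h, fun hh => hxv hh.1.symm, fun hh => hyv hh.1.symm⟩
  have hNx' : C'.neighborSet x = C.neighborSet x \ {y} := by
    ext u
    simp only [SimpleGraph.mem_neighborSet, Set.mem_diff, Set.mem_singleton_iff]
    rw [hadj]
    constructor
    · rintro (⟨h1, h2, _⟩ | (⟨h1, _⟩ | ⟨h1, _⟩))
      · exact ⟨h1, fun hh => h2 ⟨rfl, hh⟩⟩
      · exact absurd h1 hxv
      · exact absurd h1 hxyne
    · rintro ⟨h1, h2⟩
      exact Or.inl ⟨h1, fun hh => h2 hh.2, fun hh => hxyne hh.1⟩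
  have hNw : ∀ w, w ≠ v → w ≠ x → w ≠ y → C'.neighborSet w = C.neighborSet w := by
    intro w hwv hwx hwy
    ext u
    simp only [SimpleGraph.mem_neighborSet]
    rw [hadj]
    constructor
    · rintro (⟨h1, _, _⟩ | (⟨h1, _⟩ | ⟨h1, _⟩))
      · exact h1
      · exact absurd h1 hwv
      · exact absurd h1 hwy
    · intro h
      exact Or.inl ⟨h, fun hh => hwx hh.1, fun hh => hwy hh.1⟩
  -- degrees
  have hyNv : y ∉ C.neighborSet v := hvy
  have hdv : degp C' v = degp C v + 1 := by
    simp only [degp]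
    rw [hNv', Set.ncard_insert_of_notMem hyNv]
  have hdx : degp C' x + 1 = degp C x := by
    simp only [degp]
    rw [hNx']
    exact Set.ncard_diff_singleton_add_one hxy
  have hdy : degp C' y = degp C y := by
    simp only [degp]
    rw [hNy, hNy', Set.ncard_singleton, Set.ncard_singleton]
  have hdw : ∀ w, w ≠ v → w ≠ x → degp C' w = degp C w := by
    intro w hwv hwx
    by_cases hwy : w = y
    · exact hwy ▸ hdy
    · simp only [degp]; rw [hNw w hwv hwx hwy]
  have hdy1 : degp C' y = 1 := by
    simp only [degp]; rw [hNy', Set.ncard_singleton]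
  refine ⟨hfree', ?_, ?_, ?_⟩
  · intro w
    rw [hdv]
    by_cases hwv : w = v
    · rw [hwv, hdv]
    · by_cases hwx : w = x
      · subst hwx
        have := hmax w
        omega
      · rw [hdw w hwv hwx]
        have := hmax w
        omega
  · omega
  · -- sum inequality
    have key : ∀ h : V → ℕ, ∑ w, h w = h v + h x +
        ∑ w ∈ (Finset.univ.erase v).erase x, h w := by
      intro h
      rw [← Finset.add_sum_erase _ h (Finset.mem_univ v),
        ← Finset.add_sum_erase _ h (Finset.mem_erase.mpr ⟨hxv, Finset.mem_univ x⟩),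
        add_assoc]
    simp only [ep]
    rw [key fun w => degp C w ^ p, key fun w => degp C' w ^ p]
    have hrest : ∑ w ∈ (Finset.univ.erase v).erase x, degp C' w ^ p =
        ∑ w ∈ (Finset.univ.erase v).erase x, degp C w ^ p := by
      refine Finset.sum_congr rfl fun w hw => ?_
      rw [Finset.mem_erase, Finset.mem_erase] at hw
      rw [hdw w hw.2.1 hw.1]
    rw [hrest, hdv]
    have hc : degp C' x < degp C v := by
      have := hmax x
      omega
    have hkey := slope_aux p hp (degp C v) (degp C' x) hc
    rw [hdx] at hkey
    omega

end Paper
end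

section
/- Let p ≥ 2, s ≥ 0, ℓ ≥ 5. Let C be a connected B_{ℓ,s}-free graph and v ∈ V(C) with d_C(v) = Δ(C) ≥ ℓ + s − 1. Suppose C contains an x-pendent triangle T = C[{x,y,y'}] with x,y,y' ∈ V(C)∖{v}, and let C' be the graph obtained from C by deleting the three edges xy, xy', yy' and adding the edges vy, vy'. Then C' is B_{ℓ,s}-free, d_{C'}(v) = Δ(C') ≥ ℓ + s − 1, and e_p(C) < e_p(C'). -/
open Finset

namespace Paper

private lemma pow_expand (x : ℕ) : ∀ p : ℕ,
    (x+2)^p = x^p + 2 * ∑ i ∈ Finset.range p, (x+2)^i * x^(p-1-i)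
  | 0 => by simp
  | (p+1) => by
    have ih := pow_expand x p
    have hsum : ∑ i ∈ Finset.range (p+1), (x+2)^i * x^(p+1-1-i)
        = (∑ i ∈ Finset.range p, (x+2)^i * x^(p-i)) + (x+2)^p := by
      rw [Finset.sum_range_succ]
      simp
    have hsum2 : ∑ i ∈ Finset.range p, (x+2)^i * x^(p-i)
        = x * ∑ i ∈ Finset.range p, (x+2)^i * x^(p-1-i) := by
      rw [Finset.mul_sum]
      refine Finset.sum_congr rfl (fun i hi => ?_)
      have h : p - i = (p - 1 - i) + 1 := by
        have := Finset.mem_range.mp hi; omega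
      rw [h, pow_succ]; ring
    rw [hsum, hsum2]
    calc (x+2)^(p+1) = x*(x+2)^p + 2*(x+2)^p := by ring
    _ = x*(x^p + 2 * ∑ i ∈ Finset.range p, (x+2)^i * x^(p-1-i)) + 2*(x+2)^p := by rw [ih]
    _ = x^(p+1) + 2 * (x * (∑ i ∈ Finset.range p, (x+2)^i * x^(p-1-i)) + (x+2)^p) := by ring

private lemma two_expand : ∀ p : ℕ, (2:ℕ)^p = 1 + ∑ i ∈ Finset.range p, 2^i
  | 0 => by simp
  | (p+1) => by
    have ih := two_expand p
    rw [Finset.sum_range_succ, pow_succ]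
    omega

private lemma aux_pow_ge (d : ℕ) (hd : 2 ≤ d) : ∀ i : ℕ, 1 ≤ i → d^i + 2^i ≤ (d+2)^i
  | 0, h => by omega
  | 1, _ => by simp
  | (i+2), _ => by
    have ih := aux_pow_ge d hd (i+1) (by omega)
    have h1 : (d+2)^(i+2) = (d+2) * (d+2)^(i+1) := by ring
    have h2 : (d+2) * (d^(i+1) + 2^(i+1)) ≤ (d+2) * (d+2)^(i+1) :=
      Nat.mul_le_mul_left _ ih
    have h3 : (d+2) * (d^(i+1) + 2^(i+1)) = d^(i+2) + 2^(i+2) + (2*d^(i+1) + d*2^(i+1)) := by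
      ring
    omega

private lemma key_ineq (p d b : ℕ) (hp : 2 ≤ p) (hd : 4 ≤ d) (hbd : b + 2 ≤ d) :
    d^p + (b+2)^p + 2*2^p < (d+2)^p + b^p + 2 := by
  obtain ⟨n, rfl⟩ : ∃ n, p = n + 1 := ⟨p - 1, by omega⟩
  have hn : 1 ≤ n := by omega
  rw [pow_expand d, pow_expand b, two_expand]
  have hterm : ∀ i ∈ Finset.range n,
      ((b+2)^(i+1) * b^(n+1-1-(i+1)) + 2^(i+1)) ≤ (d+2)^(i+1) * d^(n+1-1-(i+1)) := by
    intro i hi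
    have hi' := Finset.mem_range.mp hi
    have e1 : (b+2)^(i+1) * b^(n-1-i) ≤ d^(i+1) * d^(n-1-i) :=
      Nat.mul_le_mul (Nat.pow_le_pow_left hbd _) (Nat.pow_le_pow_left (by omega) _)
    have e2 : (2:ℕ)^(i+1) ≤ 2^(i+1) * d^(n-1-i) :=
      Nat.le_mul_of_pos_right _ (Nat.pow_pos (by omega))
    have e3 : d^(i+1) * d^(n-1-i) + 2^(i+1) * d^(n-1-i) ≤ (d+2)^(i+1) * d^(n-1-i) := by
      rw [← Nat.add_mul]
      exact Nat.mul_le_mul_right _ (aux_pow_ge d (by omega) (i+1) (by omega))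
    have hx : n + 1 - 1 - (i+1) = n - 1 - i := by omega
    rw [hx]
    omega
  have hzero : b^(n+1-1-0) + 2 ≤ d^(n+1-1-0) := by
    simp only [Nat.sub_zero, Nat.add_sub_cancel]
    rcases Nat.eq_zero_or_pos b with rfl | hb
    · have h4 : (4:ℕ)^1 ≤ 4^n := Nat.pow_le_pow_right (by omega) hn
      have h5 : (4:ℕ)^n ≤ d^n := Nat.pow_le_pow_left hd n
      rw [Nat.zero_pow (by omega : 0 < n)]
      simp only [pow_one] at h4
      omega
    · obtain ⟨m, rfl⟩ : ∃ m, n = m + 1 := ⟨n - 1, by omega⟩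
      have h6 : b^(m+1) + 2 * b^m ≤ d^(m+1) := by
        calc b^(m+1) + 2 * b^m = (b+2) * b^m := by ring
        _ ≤ d * d^m := Nat.mul_le_mul hbd (Nat.pow_le_pow_left (by omega) m)
        _ = d^(m+1) := by ring
      have hbm : 1 ≤ b^m := Nat.one_le_pow _ _ hb
      omega
  have hsum : (∑ i ∈ Finset.range n, ((b+2)^(i+1) * b^(n+1-1-(i+1)) + 2^(i+1)))
      ≤ ∑ i ∈ Finset.range n, (d+2)^(i+1) * d^(n+1-1-(i+1)) := Finset.sum_le_sum hterm
  rw [Finset.sum_add_distrib] at hsum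
  have e1 := Finset.sum_range_succ' (fun i => (d+2)^i * d^(n+1-1-i)) n
  have e2 := Finset.sum_range_succ' (fun i => (b+2)^i * b^(n+1-1-i)) n
  have e3 := Finset.sum_range_succ' (fun i => (2:ℕ)^i) n
  simp only [pow_zero, one_mul] at e1 e2 e3
  rw [e1, e2, e3]
  omega

private lemma step_swap {n : ℕ} (hn : 1 ≤ n) (H : SimpleGraph (Fin n))
    (hH : ∀ u : Fin n, ∃ w, H.Adj u w)
    {V : Type*} [Fintype V] (G : SimpleGraph V) (y v : V) (N : Set V)
    (hyv : y ≠ v)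
    (hNadj : ∀ z ∈ N, G.Adj v z) (hNcard : n - 1 ≤ N.ncard)
    (hvN : v ∉ N) (hyN : y ∉ N)
    (hNy : ∀ w, G.Adj y w → w = v)
    (f : Fin n ↪ V) (hf : ∀ a b, H.Adj a b → G.Adj (f a) (f b)) :
    ∃ g : Fin n ↪ V, (∀ a b, H.Adj a b → G.Adj (g a) (g b)) ∧
      y ∉ Set.range g ∧ ∀ w ∈ Set.range g, w ∈ Set.range f ∨ w ∈ N := by
  classical
  by_cases hy : ∃ u, f u = y
  · obtain ⟨u0, hu0⟩ := hy
    obtain ⟨w0, hw0⟩ := hH u0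
    have hvr : v ∈ Set.range f := ⟨w0, (hNy _ (hu0 ▸ hf u0 w0 hw0)).symm ▸ rfl⟩
    have hyr : y ∈ Set.range f := ⟨u0, hu0⟩
    have hz : ∃ z ∈ N, z ∉ Set.range f := by
      by_contra h
      push_neg at h
      have hsub : insert v (insert y N) ⊆ Set.range f := by
        intro t ht
        rcases ht with rfl | ht
        · exact hvr
        rcases ht with rfl | ht
        · exact hyr
        · exact h t ht
      have hfin : (Set.range f).ncard = n := by
        rw [← Set.image_univ, Set.ncard_image_of_injective _ f.injective,
          Set.ncard_univ, Nat.card_eq_fintype_card, Fintype.card_fin]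
      have hcard := Set.ncard_le_ncard hsub (Set.toFinite _)
      rw [hfin, Set.ncard_insert_of_notMem (by simp [hyv.symm, hvN]),
        Set.ncard_insert_of_notMem hyN] at hcard
      omega
    obtain ⟨z, hzN, hzf⟩ := hz
    have hzy : z ≠ y := fun h => hyN (h ▸ hzN)
    refine ⟨⟨fun a => if a = u0 then z else f a, ?_⟩, ?_, ?_, ?_⟩
    · intro a b hab
      simp only at hab
      by_cases ha : a = u0 <;> by_cases hb : b = u0
      · rw [ha, hb]
      · rw [if_pos ha, if_neg hb] at hab
        exact absurd ⟨b, hab.symm⟩ hzf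
      · rw [if_neg ha, if_pos hb] at hab
        exact absurd ⟨a, hab⟩ hzf
      · rw [if_neg ha, if_neg hb] at hab
        exact f.injective hab
    · intro a b hab
      change G.Adj (if a = u0 then z else f a) (if b = u0 then z else f b)
      by_cases ha : a = u0 <;> by_cases hb : b = u0
      · exact absurd (ha ▸ hb ▸ hab) (H.irrefl)
      · rw [if_pos ha, if_neg hb]
        have hbv : f b = v := by
          apply hNy
          have := hf a b hab
          rwa [ha, hu0] at this
        rw [hbv]
        exact (hNadj z hzN).symm
      · rw [if_neg ha, if_pos hb]
        have hav : f a = v := by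
          apply hNy
          have := hf b a hab.symm
          rwa [hb, hu0] at this
        rw [hav]
        exact hNadj z hzN
      · rw [if_neg ha, if_neg hb]
        exact hf a b hab
    · rintro ⟨a, ha⟩
      change (if a = u0 then z else f a) = y at ha
      by_cases h : a = u0
      · rw [if_pos h] at ha; exact hzy ha
      · rw [if_neg h] at ha
        exact h (f.injective (ha.trans hu0.symm))
    · rintro w ⟨a, rfl⟩
      change (if a = u0 then z else f a) ∈ Set.range f ∨ (if a = u0 then z else f a) ∈ N
      by_cases h : a = u0
      · rw [if_pos h]; exact Or.inr hzN
      · rw [if_neg h]; exact Or.inl ⟨a, rfl⟩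
  · push_neg at hy
    exact ⟨f, hf, fun ⟨a, ha⟩ => hy a ha, fun w hw => Or.inl hw⟩

private lemma broom_nbr (ℓ s : ℕ) (hl : 5 ≤ ℓ) (u : Fin (ℓ + s)) :
    ∃ w, (broomG ℓ s).Adj u w := by
  have hu := u.isLt
  have key : ∀ m : ℕ, m < ℓ + s → m ≠ (u : ℕ) →
      ((((u:ℕ) + 1 = m ∧ m < ℓ) ∨ ((u:ℕ) = ℓ - 2 ∧ ℓ ≤ m)) ∨
        ((m + 1 = (u:ℕ) ∧ (u:ℕ) < ℓ) ∨ (m = ℓ - 2 ∧ ℓ ≤ (u:ℕ)))) →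
      ∃ w, (broomG ℓ s).Adj u w := by
    intro m hm hne hrel
    refine ⟨⟨m, hm⟩, ?_⟩
    simp only [broomG, SimpleGraph.fromRel_adj]
    refine ⟨?_, ?_⟩
    · intro h
      exact hne (congrArg Fin.val h).symm
    · exact hrel
  by_cases h1 : (u : ℕ) + 1 < ℓ
  · exact key ((u:ℕ)+1) (by omega) (by omega) (by omega)
  · by_cases h2 : ℓ ≤ (u : ℕ)
    · exact key (ℓ - 2) (by omega) (by omega) (by omega)
    · exact key ((u:ℕ) - 1) (by omega) (by omega) (by omega)

/-- pendent triangle operation. -/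
theorem pendentTriangle_op (p s ℓ : ℕ) (hp : 2 ≤ p) (hl : 5 ≤ ℓ)
    {V : Type*} [Fintype V] (C : SimpleGraph V) (hconn : C.Connected)
    (hfree : Free (broomG ℓ s) C) (v x y y' : V)
    (hmax : ∀ w, degp C w ≤ degp C v) (hdegv : ℓ + s - 1 ≤ degp C v)
    (hxv : x ≠ v) (hyv : y ≠ v) (hy'v : y' ≠ v)
    (hxy : C.Adj x y) (hxy' : C.Adj x y') (hyy' : C.Adj y y')
    (hpy : ∀ w, C.Adj w y → w = x ∨ w = y') (hpy' : ∀ w, C.Adj w y' → w = x ∨ w = y)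
    (C' : SimpleGraph V)
    (hC' : C' = C.deleteEdges {s(x, y), s(x, y'), s(y, y')}
        ⊔ SimpleGraph.fromEdgeSet {s(v, y), s(v, y')}) :
    Free (broomG ℓ s) C' ∧ (∀ w, degp C' w ≤ degp C' v) ∧
      ℓ + s - 1 ≤ degp C' v ∧ ep p C < ep p C' := by
  classical
  have hxyne : x ≠ y := hxy.ne
  have hxy'ne : x ≠ y' := hxy'.ne
  have hyy'ne : y ≠ y' := hyy'.ne
  have hvx : v ≠ x := Ne.symm hxv
  have hvy : v ≠ y := Ne.symm hyv
  have hvy' : v ≠ y' := Ne.symm hy'v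
  have hvady : ¬ C.Adj v y := by
    intro h; rcases hpy v h with h1 | h1
    · exact hxv h1.symm
    · exact hy'v h1.symm
  have hvady' : ¬ C.Adj v y' := by
    intro h; rcases hpy' v h with h1 | h1
    · exact hxv h1.symm
    · exact hyv h1.symm
  have hC'adj : ∀ a b, C'.Adj a b ↔
      ((C.Adj a b ∧ ¬(s(a,b) = s(x,y)) ∧ ¬(s(a,b) = s(x,y')) ∧ ¬(s(a,b) = s(y,y'))) ∨
        ((s(a,b) = s(v,y) ∨ s(a,b) = s(v,y')) ∧ a ≠ b)) := by
    intro a b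
    rw [hC']
    simp only [SimpleGraph.sup_adj, SimpleGraph.deleteEdges_adj, SimpleGraph.fromEdgeSet_adj,
      Set.mem_insert_iff, Set.mem_singleton_iff]
    tauto
  have hadjy : ∀ w, C'.Adj y w ↔ w = v := by
    intro w
    rw [hC'adj]
    simp only [Sym2.eq_iff]
    constructor
    · rintro (⟨h, h1, h2, h3⟩ | ⟨(h | h), hne⟩)
      · rcases hpy w h.symm with rfl | rfl
        · exact absurd (Or.inr ⟨by trivial, by trivial⟩) h1
        · exact absurd (Or.inl ⟨by trivial, by trivial⟩) h3
      · rcases h with ⟨h', -⟩ | ⟨-, rfl⟩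
        · exact absurd h'.symm hvy
        · rfl
      · rcases h with ⟨h', -⟩ | ⟨h', -⟩
        · exact absurd h'.symm hvy
        · exact absurd h' hyy'ne
    · rintro rfl
      exact Or.inr ⟨Or.inl (Or.inr ⟨by trivial, by trivial⟩), hyv⟩
  have hadjy' : ∀ w, C'.Adj y' w ↔ w = v := by
    intro w
    rw [hC'adj]
    simp only [Sym2.eq_iff]
    constructor
    · rintro (⟨h, h1, h2, h3⟩ | ⟨(h | h), hne⟩)
      · rcases hpy' w h.symm with rfl | rfl
        · exact absurd (Or.inr ⟨by trivial, by trivial⟩) h2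
        · exact absurd (Or.inr ⟨by trivial, by trivial⟩) h3
      · rcases h with ⟨h', -⟩ | ⟨h', -⟩
        · exact absurd h'.symm hvy'
        · exact absurd h'.symm hyy'ne
      · rcases h with ⟨h', -⟩ | ⟨-, rfl⟩
        · exact absurd h'.symm hvy'
        · rfl
    · rintro rfl
      exact Or.inr ⟨Or.inr (Or.inr ⟨by trivial, by trivial⟩), hy'v⟩
  have hadjx : ∀ w, C'.Adj x w ↔ (C.Adj x w ∧ w ≠ y ∧ w ≠ y') := by
    intro w
    rw [hC'adj]
    simp only [Sym2.eq_iff]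
    constructor
    · rintro (⟨h, h1, h2, h3⟩ | ⟨(h | h), hne⟩)
      · refine ⟨h, ?_, ?_⟩
        · rintro rfl; exact h1 (Or.inl ⟨by trivial, by trivial⟩)
        · rintro rfl; exact h2 (Or.inl ⟨by trivial, by trivial⟩)
      · rcases h with ⟨h', -⟩ | ⟨h', -⟩
        · exact absurd h' hxv
        · exact absurd h' hxyne
      · rcases h with ⟨h', -⟩ | ⟨h', -⟩
        · exact absurd h' hxv
        · exact absurd h' hxy'ne
    · rintro ⟨h, hw1, hw2⟩
      left
      refine ⟨h, ?_, ?_, ?_⟩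
      · rintro (⟨-, h'⟩ | ⟨h', -⟩)
        · exact hw1 h'
        · exact hxyne h'
      · rintro (⟨-, h'⟩ | ⟨h', -⟩)
        · exact hw2 h'
        · exact hxy'ne h'
      · rintro (⟨h', -⟩ | ⟨h', -⟩)
        · exact hxyne h'
        · exact hxy'ne h'
  have hadjv : ∀ w, C'.Adj v w ↔ (C.Adj v w ∨ w = y ∨ w = y') := by
    intro w
    rw [hC'adj]
    simp only [Sym2.eq_iff]
    constructor
    · rintro (⟨h, -, -, -⟩ | ⟨(h | h), hne⟩)
      · exact Or.inl h
      · rcases h with ⟨-, h'⟩ | ⟨h', -⟩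
        · exact Or.inr (Or.inl h')
        · exact absurd h' hvy
      · rcases h with ⟨-, h'⟩ | ⟨h', -⟩
        · exact Or.inr (Or.inr h')
        · exact absurd h' hvy'
    · rintro (h | rfl | rfl)
      · left
        refine ⟨h, ?_, ?_, ?_⟩
        · rintro (⟨h', -⟩ | ⟨h', -⟩)
          · exact hvx h'
          · exact hvy h'
        · rintro (⟨h', -⟩ | ⟨h', -⟩)
          · exact hvx h'
          · exact hvy' h'
        · rintro (⟨h', -⟩ | ⟨h', -⟩)
          · exact hvy h'
          · exact hvy' h'
      · exact Or.inr ⟨Or.inl (Or.inl ⟨by trivial, by trivial⟩), hvy⟩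
      · exact Or.inr ⟨Or.inr (Or.inl ⟨by trivial, by trivial⟩), hvy'⟩
  have hadjo : ∀ w u, w ≠ v → w ≠ x → w ≠ y → w ≠ y' → (C'.Adj w u ↔ C.Adj w u) := by
    intro w u h1 h2 h3 h4
    rw [hC'adj]
    simp only [Sym2.eq_iff]
    constructor
    · rintro (⟨h, -, -, -⟩ | ⟨(h | h), hne⟩)
      · exact h
      · rcases h with ⟨h', -⟩ | ⟨h', -⟩
        · exact absurd h' h1
        · exact absurd h' h3
      · rcases h with ⟨h', -⟩ | ⟨h', -⟩
        · exact absurd h' h1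
        · exact absurd h' h4
    · intro h
      left
      refine ⟨h, ?_, ?_, ?_⟩
      · rintro (⟨h', -⟩ | ⟨h', -⟩)
        · exact h2 h'
        · exact h3 h'
      · rintro (⟨h', -⟩ | ⟨h', -⟩)
        · exact h2 h'
        · exact h4 h'
      · rintro (⟨h', -⟩ | ⟨h', -⟩)
        · exact h3 h'
        · exact h4 h'
  -- neighbor sets and degrees
  have hdC'y : degp C' y = 1 := by
    have h : C'.neighborSet y = {v} := by
      ext w
      simp only [SimpleGraph.mem_neighborSet, Set.mem_singleton_iff, hadjy]
    rw [degp, h, Set.ncard_singleton]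
  have hdC'y' : degp C' y' = 1 := by
    have h : C'.neighborSet y' = {v} := by
      ext w
      simp only [SimpleGraph.mem_neighborSet, Set.mem_singleton_iff, hadjy']
    rw [degp, h, Set.ncard_singleton]
  have hdCy : degp C y = 2 := by
    have h : C.neighborSet y = {x, y'} := by
      ext w
      simp only [SimpleGraph.mem_neighborSet, Set.mem_insert_iff, Set.mem_singleton_iff]
      constructor
      · intro h; exact hpy w h.symm
      · rintro (rfl | rfl)
        · exact hxy.symm
        · exact hyy'
    rw [degp, h, Set.ncard_pair hxy'ne]
  have hdCy' : degp C y' = 2 := by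
    have h : C.neighborSet y' = {x, y} := by
      ext w
      simp only [SimpleGraph.mem_neighborSet, Set.mem_insert_iff, Set.mem_singleton_iff]
      constructor
      · intro h; exact hpy' w h.symm
      · rintro (rfl | rfl)
        · exact hxy'.symm
        · exact hyy'.symm
    rw [degp, h, Set.ncard_pair hxyne]
  have hsubx : ({y, y'} : Set V) ⊆ C.neighborSet x := by
    intro w hw
    rcases hw with rfl | hw
    · exact hxy
    · rw [Set.mem_singleton_iff] at hw
      subst hw
      exact hxy'
  have hdCx2 : 2 ≤ degp C x := by
    have h := Set.ncard_le_ncard hsubx (Set.toFinite _)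
    rwa [Set.ncard_pair hyy'ne] at h
  have hdC'x : degp C' x = degp C x - 2 := by
    have h : C'.neighborSet x = C.neighborSet x \ {y, y'} := by
      ext w
      simp only [SimpleGraph.mem_neighborSet, Set.mem_diff, Set.mem_insert_iff,
        Set.mem_singleton_iff, hadjx]
      tauto
    rw [degp, h, Set.ncard_diff hsubx, Set.ncard_pair hyy'ne]
    rfl
  have hdC'v : degp C' v = degp C v + 2 := by
    have h : C'.neighborSet v = insert y (insert y' (C.neighborSet v)) := by
      ext w
      simp only [SimpleGraph.mem_neighborSet, Set.mem_insert_iff, hadjv]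
      tauto
    have hy'mem : y' ∉ C.neighborSet v := hvady'
    have hymem : y ∉ insert y' (C.neighborSet v) := by
      simp only [Set.mem_insert_iff, SimpleGraph.mem_neighborSet]
      push_neg
      exact ⟨hyy'ne, hvady⟩
    rw [degp, h, Set.ncard_insert_of_notMem hymem (Set.toFinite _),
      Set.ncard_insert_of_notMem hy'mem (Set.toFinite _)]
    rfl
  have hdother : ∀ w, w ≠ v → w ≠ x → w ≠ y → w ≠ y' → degp C' w = degp C w := by
    intro w h1 h2 h3 h4
    unfold degp
    congr 1
    ext u
    simp only [SimpleGraph.mem_neighborSet]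
    exact hadjo w u h1 h2 h3 h4
  have hd4 : 4 ≤ degp C v := by omega
  -- freeness
  have hvN : v ∉ C.neighborSet v := by
    simp [SimpleGraph.mem_neighborSet]
  have hNadj : ∀ z ∈ C.neighborSet v, C'.Adj v z := by
    intro z hz
    rw [hadjv]
    exact Or.inl hz
  have hfree' : Free (broomG ℓ s) C' := by
    rintro ⟨f, hf⟩
    obtain ⟨f1, hf1, hy1, hr1⟩ := step_swap (by omega) (broomG ℓ s)
      (broom_nbr ℓ s hl) C' y v (C.neighborSet v) hyv hNadj hdegv hvN hvady
      (fun w hw => (hadjy w).mp hw) f hf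
    obtain ⟨f2, hf2, hy2', hr2⟩ := step_swap (by omega) (broomG ℓ s)
      (broom_nbr ℓ s hl) C' y' v (C.neighborSet v) hy'v hNadj hdegv hvN hvady'
      (fun w hw => (hadjy' w).mp hw) f1 hf1
    have hy2 : y ∉ Set.range f2 := by
      intro h
      rcases hr2 y h with h' | h'
      · exact hy1 h'
      · exact hvady h'
    refine hfree ⟨f2, fun a b hab => ?_⟩
    have h := hf2 a b hab
    rw [hC'adj] at h
    rcases h with ⟨h, -, -, -⟩ | ⟨h, -⟩
    · exact h
    · exfalso
      rcases h with h | h <;> rw [Sym2.eq_iff] at h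
      · rcases h with ⟨-, h'⟩ | ⟨h', -⟩
        · exact hy2 ⟨b, h'⟩
        · exact hy2 ⟨a, h'⟩
      · rcases h with ⟨-, h'⟩ | ⟨h', -⟩
        · exact hy2' ⟨b, h'⟩
        · exact hy2' ⟨a, h'⟩
  -- max degree
  have hmax' : ∀ w, degp C' w ≤ degp C' v := by
    intro w
    rw [hdC'v]
    by_cases h1 : w = v
    · rw [h1, hdC'v]
    by_cases h2 : w = x
    · rw [h2, hdC'x]; have := hmax x; omega
    by_cases h3 : w = y
    · rw [h3, hdC'y]; omega
    by_cases h4 : w = y'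
    · rw [h4, hdC'y']; omega
    rw [hdother w h1 h2 h3 h4]; have := hmax w; omega
  -- ep
  have hepC : ep p C < ep p C' := by
    have hsetne : v ∉ ({x, y, y'} : Finset V) := by
      simp only [Finset.mem_insert, Finset.mem_singleton]
      push_neg
      exact ⟨hvx, hvy, hvy'⟩
    have hsetne2 : x ∉ ({y, y'} : Finset V) := by
      simp only [Finset.mem_insert, Finset.mem_singleton]
      push_neg
      exact ⟨hxyne, hxy'ne⟩
    have hsetne3 : y ∉ ({y'} : Finset V) := by
      simp only [Finset.mem_singleton]
      exact hyy'ne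
    have hT : ∀ G : SimpleGraph V, ep p G =
        ∑ w ∈ Finset.univ \ {v, x, y, y'}, degp G w ^ p +
          (degp G v ^ p + (degp G x ^ p + (degp G y ^ p + degp G y' ^ p))) := by
      intro G
      rw [ep, ← Finset.sum_sdiff (Finset.subset_univ ({v,x,y,y'} : Finset V))]
      congr 1
      rw [Finset.sum_insert hsetne, Finset.sum_insert hsetne2,
        Finset.sum_insert hsetne3, Finset.sum_singleton]
    rw [hT C, hT C']
    have hoff : ∑ w ∈ Finset.univ \ {v,x,y,y'}, degp C' w ^ p
        = ∑ w ∈ Finset.univ \ {v,x,y,y'}, degp C w ^ p := by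
      refine Finset.sum_congr rfl (fun w hw => ?_)
      simp only [Finset.mem_sdiff, Finset.mem_univ, true_and, Finset.mem_insert,
        Finset.mem_singleton] at hw
      push_neg at hw
      rw [hdother w hw.1 hw.2.1 hw.2.2.1 hw.2.2.2]
    rw [hoff]
    have hkey := key_ineq p (degp C v) (degp C x - 2) hp hd4 (by have := hmax x; omega)
    have ha : degp C x - 2 + 2 = degp C x := by omega
    rw [ha] at hkey
    rw [hdC'v, hdC'x, hdC'y, hdC'y', hdCy, hdCy']
    simp only [one_pow]
    have h2p : (2:ℕ)^p = 2^p := rfl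
    linarith [hkey]
  exact ⟨hfree', hmax', by rw [hdC'v]; omega, hepC⟩

end Paper
end

section
/- Let p ≥ 2, s ≥ 0, ℓ ≥ 5. Let C be a connected B_{ℓ,s}-free graph and v ∈ V(C) with d_C(v) = Δ(C) ≥ ℓ + s − 1. Suppose C contains an x-pendent diamond D = C[{x,z,y,y'}] with x,z,y,y' ∈ V(C)∖{v}, and let C' be the graph obtained from C by deleting the five edges xy, xy', zy, zy', yy' and adding the edges vz, vy, vy'. Then C' is B_{ℓ,s}-free, d_{C'}(v) = Δ(C') ≥ ℓ + s − 1, and e_p(C) < e_p(C'). -/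
open Finset

namespace Paper

/-- Auxiliary: monotonicity of the difference `(n+c)^p - n^p`. -/
lemma pd_pow_add_le_aux (p c : ℕ) : ∀ {m n : ℕ}, m ≤ n → (m+c)^p + n^p ≤ (n+c)^p + m^p := by
  induction p with
  | zero => intro m n _; simp
  | succ p ih =>
    intro m n h
    obtain ⟨e, rfl⟩ : ∃ e, n = m + e := ⟨n - m, by omega⟩
    have h1 : (m+c)^p + (m+e)^p ≤ (m+e+c)^p + m^p := ih (by omega)
    have h2 : (m+c)^p ≤ (m+e+c)^p := Nat.pow_le_pow_left (by omega) p
    have h3 : (m+e)^p ≤ (m+e+c)^p := Nat.pow_le_pow_left (by omega) p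
    have k1 : ((m+c)^p + (m+e)^p) * m ≤ ((m+e+c)^p + m^p) * m := Nat.mul_le_mul_right m h1
    have k2 : (m+c)^p * c ≤ (m+e+c)^p * c := Nat.mul_le_mul_right c h2
    have k3 : (m+e)^p * e ≤ (m+e+c)^p * e := Nat.mul_le_mul_right e h3
    have g1 : (m+c)^(p+1) = (m+c)^p * m + (m+c)^p * c := by ring
    have g2 : (m+e)^(p+1) = (m+e)^p * m + (m+e)^p * e := by ring
    have g3 : (m+e+c)^(p+1) = (m+e+c)^p * m + (m+e+c)^p * e + (m+e+c)^p * c := by ring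
    have g4 : m^(p+1) = m^p * m := by ring
    rw [g1, g2, g3, g4]
    nlinarith [k1, k2, k3]

lemma pd_main_ineq_aux : ∀ p, 2 ≤ p → ∀ n : ℕ, 2 ≤ n →
    2*(n+2)^p + 2^p + 2*3^p < (n+5)^p + n^p + 3 := by
  intro p hp
  induction p, hp using Nat.le_induction with
  | base => intro n hn; nlinarith [sq_nonneg n]
  | succ p hp ih =>
    intro n hn
    have IH := ih n hn
    have hAB : n^p ≤ (n+5)^p := Nat.pow_le_pow_left (by omega) p
    have h2 : 4 ≤ 2^p := by calc (4:ℕ) = 2^2 := by norm_num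
                                 _ ≤ 2^p := Nat.pow_le_pow_right (by norm_num) hp
    have h3 : 9 ≤ 3^p := by calc (9:ℕ) = 3^2 := by norm_num
                                 _ ≤ 3^p := Nat.pow_le_pow_right (by norm_num) hp
    have k1 : (2*(n+2)^p + 2^p + 2*3^p + 1) * (n+2) ≤ ((n+5)^p + n^p + 3) * (n+2) :=
      Nat.mul_le_mul_right _ (by omega)
    have k3 : 9 * n ≤ 3^p * n := Nat.mul_le_mul_right n h3
    have k4 : 4 * n ≤ 2^p * n := Nat.mul_le_mul_right n h2
    have g1 : 2*(n+2)^(p+1) = 2*(n+2)^p * (n+2) := by ring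
    have g2 : (n+5)^(p+1) = (n+5)^p * (n+5) := by ring
    have g3 : n^(p+1) = n^p * n := by ring
    have g4 : 2^(p+1) = 2*2^p := by ring
    have g5 : (3:ℕ)^(p+1) = 3*3^p := by ring
    rw [g1, g2, g3, g4, g5]
    set A := (n+5)^p with hA
    set B := n^p with hB
    set D := (n+2)^p with hD
    set t2 := 2^p with ht2
    set t3 := 3^p with ht3
    have k5 : 2 * t3 ≤ n * t3 := Nat.mul_le_mul_right _ hn
    have k6 : 2 * B ≤ 2 * A := by omega
    linarith [k1, k3, k4, k5, k6, hn]

lemma pd_main_num (p dv dx : ℕ) (hp : 2 ≤ p) (hv : 4 ≤ dv) (hx2 : 2 ≤ dx) (hxv : dx ≤ dv) :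
    dv^p + dx^p + 2^p + 2*3^p < (dv+3)^p + (dx-2)^p + 3 := by
  obtain ⟨a, rfl⟩ : ∃ a, dx = a + 2 := ⟨dx - 2, by omega⟩
  obtain ⟨n, rfl⟩ : ∃ n, dv = n + 2 := ⟨dv - 2, by omega⟩
  have h1 : (a+2)^p + n^p ≤ (n+2)^p + a^p := pd_pow_add_le_aux p 2 (by omega)
  have h2 : 2*(n+2)^p + 2^p + 2*3^p < (n+5)^p + n^p + 3 := pd_main_ineq_aux p hp n (by omega)
  have e1 : n + 2 + 3 = n + 5 := by omega
  rw [e1]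
  have e2 : a + 2 - 2 = a := by omega
  rw [e2]
  linarith

lemma pd_broom_ex_adj (ℓ s : ℕ) (hl : 5 ≤ ℓ) (t : Fin (ℓ + s)) :
    ∃ u, (broomG ℓ s).Adj t u := by
  have ht := t.isLt
  by_cases h1 : (t : ℕ) + 1 < ℓ
  · refine ⟨⟨(t : ℕ) + 1, by omega⟩, ?_⟩
    simp only [broomG, SimpleGraph.fromRel_adj]
    exact ⟨Fin.ne_of_val_ne (show (t:ℕ) ≠ (t:ℕ)+1 by omega), Or.inl (Or.inl ⟨trivial, h1⟩)⟩
  · by_cases h2 : (t : ℕ) < ℓ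
    · refine ⟨⟨ℓ - 2, by omega⟩, ?_⟩
      simp only [broomG, SimpleGraph.fromRel_adj]
      exact ⟨Fin.ne_of_val_ne (show (t:ℕ) ≠ ℓ-2 by omega), Or.inr (Or.inl ⟨by omega, h2⟩)⟩
    · refine ⟨⟨ℓ - 2, by omega⟩, ?_⟩
      simp only [broomG, SimpleGraph.fromRel_adj]
      exact ⟨Fin.ne_of_val_ne (show (t:ℕ) ≠ ℓ-2 by omega), Or.inr (Or.inr ⟨trivial, by omega⟩)⟩

/-- pendent diamond operation. -/
theorem pendentDiamond_op (p s ℓ : ℕ) (hp : 2 ≤ p) (hl : 5 ≤ ℓ)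
    {V : Type*} [Fintype V] (C : SimpleGraph V) (hconn : C.Connected)
    (hfree : Free (broomG ℓ s) C) (v x z y y' : V)
    (hmax : ∀ w, degp C w ≤ degp C v) (hdegv : ℓ + s - 1 ≤ degp C v)
    (hxv : x ≠ v) (hzv : z ≠ v) (hyv : y ≠ v) (hy'v : y' ≠ v) (hzx : z ≠ x)
    (hxy : C.Adj x y) (hxy' : C.Adj x y') (hzy : C.Adj z y) (hzy' : C.Adj z y')
    (hyy' : C.Adj y y')
    (hpz : ∀ w, C.Adj w z → w = y ∨ w = y')
    (hpy : ∀ w, C.Adj w y → w = x ∨ w = z ∨ w = y')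
    (hpy' : ∀ w, C.Adj w y' → w = x ∨ w = z ∨ w = y)
    (C' : SimpleGraph V)
    (hC' : C' = C.deleteEdges {s(x, y), s(x, y'), s(z, y), s(z, y'), s(y, y')}
        ⊔ SimpleGraph.fromEdgeSet {s(v, z), s(v, y), s(v, y')}) :
    Free (broomG ℓ s) C' ∧ (∀ w, degp C' w ≤ degp C' v) ∧
      ℓ + s - 1 ≤ degp C' v ∧ ep p C < ep p C' := by
  classical
  have nxy : x ≠ y := hxy.ne
  have nxy' : x ≠ y' := hxy'.ne
  have nzy : z ≠ y := hzy.ne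
  have nzy' : z ≠ y' := hzy'.ne
  have nyy' : y ≠ y' := hyy'.ne
  have nvx : v ≠ x := Ne.symm hxv
  have nvz : v ≠ z := Ne.symm hzv
  have nvy : v ≠ y := Ne.symm hyv
  have nvy' : v ≠ y' := Ne.symm hy'v
  have nxz : x ≠ z := Ne.symm hzx
  have nyx : y ≠ x := Ne.symm nxy
  have ny'x : y' ≠ x := Ne.symm nxy'
  have nyz : y ≠ z := Ne.symm nzy
  have ny'z : y' ≠ z := Ne.symm nzy'
  have ny'y : y' ≠ y := Ne.symm nyy'
  have hCz : ∀ u, C.Adj z u ↔ u = y ∨ u = y' := fun u =>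
    ⟨fun h => hpz u h.symm, fun h => h.elim (fun e => e ▸ hzy) (fun e => e ▸ hzy')⟩
  have hCy : ∀ u, C.Adj y u ↔ u = x ∨ u = z ∨ u = y' := fun u =>
    ⟨fun h => hpy u h.symm, fun h => by rcases h with rfl|rfl|rfl; exacts [hxy.symm, hzy.symm, hyy']⟩
  have hCy' : ∀ u, C.Adj y' u ↔ u = x ∨ u = z ∨ u = y := fun u =>
    ⟨fun h => hpy' u h.symm, fun h => by rcases h with rfl|rfl|rfl; exacts [hxy'.symm, hzy'.symm, hyy'.symm]⟩
  have hnvz : ¬ C.Adj v z := fun h => (hpz v h).elim (fun e => hyv e.symm) (fun e => hy'v e.symm)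
  have hnvy : ¬ C.Adj v y := fun h => (hpy v h).elim (fun e => hxv e.symm)
    (fun h => h.elim (fun e => hzv e.symm) (fun e => hy'v e.symm))
  have hnvy' : ¬ C.Adj v y' := fun h => (hpy' v h).elim (fun e => hxv e.symm)
    (fun h => h.elim (fun e => hzv e.symm) (fun e => hyv e.symm))
  have hadj : ∀ a b, C'.Adj a b ↔
      ((C.Adj a b ∧ ¬(s(a,b) = s(x,y) ∨ s(a,b) = s(x,y') ∨ s(a,b) = s(z,y) ∨ s(a,b) = s(z,y') ∨ s(a,b) = s(y,y'))) ∨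
        ((s(a,b) = s(v,z) ∨ s(a,b) = s(v,y) ∨ s(a,b) = s(v,y')) ∧ a ≠ b)) := by
    intro a b
    rw [hC']
    simp only [SimpleGraph.sup_adj, SimpleGraph.deleteEdges_adj, SimpleGraph.fromEdgeSet_adj,
      Set.mem_insert_iff, Set.mem_singleton_iff]
  have hNv : ∀ u, C'.Adj v u ↔ (C.Adj v u ∨ u = z ∨ u = y ∨ u = y') := by
    intro u
    rw [hadj]
    constructor
    · rintro (⟨h, -⟩ | ⟨e, -⟩)
      · exact Or.inl h
      · rcases e with e|e|e <;> rw [Sym2.eq_iff] at e <;> rcases e with ⟨e1, e2⟩|⟨e1, e2⟩ <;>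
          first
          | exact Or.inr (Or.inl e2)
          | exact Or.inr (Or.inr (Or.inl e2))
          | exact Or.inr (Or.inr (Or.inr e2))
          | exact absurd e1 nvz
          | exact absurd e1 nvy
          | exact absurd e1 nvy'
    · rintro (h | rfl | rfl | rfl)
      · refine Or.inl ⟨h, ?_⟩
        rintro (e|e|e|e|e) <;> rw [Sym2.eq_iff] at e <;> rcases e with ⟨e1, -⟩|⟨e1, -⟩ <;>
          first
          | exact nvx e1
          | exact nvy e1
          | exact nvy' e1
          | exact nvz e1
      · exact Or.inr ⟨Or.inl rfl, nvz⟩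
      · exact Or.inr ⟨Or.inr (Or.inl rfl), nvy⟩
      · exact Or.inr ⟨Or.inr (Or.inr rfl), nvy'⟩
  have hNx : ∀ u, C'.Adj x u ↔ (C.Adj x u ∧ u ≠ y ∧ u ≠ y') := by
    intro u
    rw [hadj]
    constructor
    · rintro (⟨h, hn⟩ | ⟨e, -⟩)
      · refine ⟨h, fun e => ?_, fun e => ?_⟩
        · exact hn (Or.inl (by rw [e]))
        · exact hn (Or.inr (Or.inl (by rw [e])))
      · exfalso
        rcases e with e|e|e <;> rw [Sym2.eq_iff] at e <;> rcases e with ⟨e1, -⟩|⟨e1, -⟩ <;>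
          first
          | exact hxv e1
          | exact nxz e1
          | exact nxy e1
          | exact nxy' e1
    · rintro ⟨h, h1, h2⟩
      refine Or.inl ⟨h, ?_⟩
      rintro (e|e|e|e|e) <;> rw [Sym2.eq_iff] at e <;> rcases e with ⟨e1, e2⟩|⟨e1, -⟩ <;>
        first
        | exact h1 e2
        | exact h2 e2
        | exact nxz e1
        | exact nxy e1
        | exact nxy' e1
  have hNz : ∀ u, C'.Adj z u ↔ u = v := by
    intro u
    rw [hadj]
    constructor
    · rintro (⟨h, hn⟩ | ⟨e, -⟩)
      · exfalso
        rcases (hCz u).1 h with rfl | rfl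
        · exact hn (Or.inr (Or.inr (Or.inl rfl)))
        · exact hn (Or.inr (Or.inr (Or.inr (Or.inl rfl))))
      · rcases e with e|e|e <;> rw [Sym2.eq_iff] at e <;> rcases e with ⟨e1, e2⟩|⟨e1, e2⟩ <;>
          first
          | exact e2
          | exact absurd e1 hzv
          | exact absurd e1 nzy
          | exact absurd e1 nzy'
    · rintro rfl
      exact Or.inr ⟨Or.inl Sym2.eq_swap, hzv⟩
  have hNy : ∀ u, C'.Adj y u ↔ u = v := by
    intro u
    rw [hadj]
    constructor
    · rintro (⟨h, hn⟩ | ⟨e, -⟩)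
      · exfalso
        rcases (hCy u).1 h with rfl | rfl | rfl
        · exact hn (Or.inl Sym2.eq_swap)
        · exact hn (Or.inr (Or.inr (Or.inl Sym2.eq_swap)))
        · exact hn (Or.inr (Or.inr (Or.inr (Or.inr rfl))))
      · rcases e with e|e|e <;> rw [Sym2.eq_iff] at e <;> rcases e with ⟨e1, e2⟩|⟨e1, e2⟩ <;>
          first
          | exact e2
          | exact absurd e1 hyv
          | exact absurd e1 nyz
          | exact absurd e1 nyy'
    · rintro rfl
      exact Or.inr ⟨Or.inr (Or.inl Sym2.eq_swap), hyv⟩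
  have hNy' : ∀ u, C'.Adj y' u ↔ u = v := by
    intro u
    rw [hadj]
    constructor
    · rintro (⟨h, hn⟩ | ⟨e, -⟩)
      · exfalso
        rcases (hCy' u).1 h with rfl | rfl | rfl
        · exact hn (Or.inr (Or.inl Sym2.eq_swap))
        · exact hn (Or.inr (Or.inr (Or.inr (Or.inl Sym2.eq_swap))))
        · exact hn (Or.inr (Or.inr (Or.inr (Or.inr Sym2.eq_swap))))
      · rcases e with e|e|e <;> rw [Sym2.eq_iff] at e <;> rcases e with ⟨e1, e2⟩|⟨e1, e2⟩ <;>
          first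
          | exact e2
          | exact absurd e1 hy'v
          | exact absurd e1 ny'z
          | exact absurd e1 ny'y
    · rintro rfl
      exact Or.inr ⟨Or.inr (Or.inr Sym2.eq_swap), hy'v⟩
  have hNw : ∀ w, w ≠ v → w ≠ x → w ≠ z → w ≠ y → w ≠ y' → ∀ u, C'.Adj w u ↔ C.Adj w u := by
    intro w h1 h2 h3 h4 h5 u
    rw [hadj]
    constructor
    · rintro (⟨h, -⟩ | ⟨e, -⟩)
      · exact h
      · exfalso
        rcases e with e|e|e <;> rw [Sym2.eq_iff] at e <;> rcases e with ⟨e1, -⟩|⟨e1, -⟩ <;>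
          first
          | exact h1 e1
          | exact h3 e1
          | exact h4 e1
          | exact h5 e1
    · intro h
      refine Or.inl ⟨h, ?_⟩
      rintro (e|e|e|e|e) <;> rw [Sym2.eq_iff] at e <;> rcases e with ⟨e1, -⟩|⟨e1, -⟩ <;>
        first
        | exact h2 e1
        | exact h3 e1
        | exact h4 e1
        | exact h5 e1
  -- neighbor sets
  have hNSv : C'.neighborSet v = C.neighborSet v ∪ {z, y, y'} := by
    ext u
    simp only [SimpleGraph.mem_neighborSet, Set.mem_union, Set.mem_insert_iff,
      Set.mem_singleton_iff, hNv u]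
  have hNSx : C'.neighborSet x = C.neighborSet x \ {y, y'} := by
    ext u
    simp only [SimpleGraph.mem_neighborSet, Set.mem_diff, Set.mem_insert_iff,
      Set.mem_singleton_iff, hNx u, not_or]
  have hNSz : C'.neighborSet z = {v} := by
    ext u; simp only [SimpleGraph.mem_neighborSet, Set.mem_singleton_iff, hNz u]
  have hNSy : C'.neighborSet y = {v} := by
    ext u; simp only [SimpleGraph.mem_neighborSet, Set.mem_singleton_iff, hNy u]
  have hNSy' : C'.neighborSet y' = {v} := by
    ext u; simp only [SimpleGraph.mem_neighborSet, Set.mem_singleton_iff, hNy' u]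
  have hNSCz : C.neighborSet z = {y, y'} := by
    ext u; simp only [SimpleGraph.mem_neighborSet, Set.mem_insert_iff, Set.mem_singleton_iff, hCz u]
  have hNSCy : C.neighborSet y = {x, z, y'} := by
    ext u; simp only [SimpleGraph.mem_neighborSet, Set.mem_insert_iff, Set.mem_singleton_iff, hCy u]
  have hNSCy' : C.neighborSet y' = {x, z, y} := by
    ext u; simp only [SimpleGraph.mem_neighborSet, Set.mem_insert_iff, Set.mem_singleton_iff, hCy' u]
  have hNSw : ∀ w, w ≠ v → w ≠ x → w ≠ z → w ≠ y → w ≠ y' → C'.neighborSet w = C.neighborSet w := by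
    intro w h1 h2 h3 h4 h5
    ext u
    simp only [SimpleGraph.mem_neighborSet, hNw w h1 h2 h3 h4 h5 u]
  -- degrees
  have hdisj : Disjoint (C.neighborSet v) ({z, y, y'} : Set V) := by
    rw [Set.disjoint_left]
    rintro a ha (rfl | rfl | rfl)
    exacts [hnvz ha, hnvy ha, hnvy' ha]
  have h3card : ({z, y, y'} : Set V).ncard = 3 := by
    rw [Set.ncard_insert_of_notMem (by simp [nzy, nzy']), Set.ncard_pair nyy']
  have hdv' : degp C' v = degp C v + 3 := by
    unfold degp
    rw [hNSv, Set.ncard_union_eq hdisj, h3card]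
  have hsubx : ({y, y'} : Set V) ⊆ C.neighborSet x := by
    rintro u (rfl | rfl)
    exacts [hxy, hxy']
  have hdx2 : 2 ≤ degp C x := by
    unfold degp
    calc 2 = ({y, y'} : Set V).ncard := (Set.ncard_pair nyy').symm
    _ ≤ _ := Set.ncard_le_ncard hsubx (Set.toFinite _)
  have hdx' : degp C' x = degp C x - 2 := by
    unfold degp
    rw [hNSx, Set.ncard_diff hsubx, Set.ncard_pair nyy']
  have hdCz : degp C z = 2 := by
    unfold degp; rw [hNSCz]; exact Set.ncard_pair nyy'
  have hdCy : degp C y = 3 := by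
    unfold degp
    rw [hNSCy, Set.ncard_insert_of_notMem (by simp [nxz, nxy']), Set.ncard_pair nzy']
  have hdCy' : degp C y' = 3 := by
    unfold degp
    rw [hNSCy', Set.ncard_insert_of_notMem (by simp [nxz, nxy]), Set.ncard_pair nzy]
  have hdz' : degp C' z = 1 := by unfold degp; rw [hNSz]; exact Set.ncard_singleton v
  have hdy' : degp C' y = 1 := by unfold degp; rw [hNSy]; exact Set.ncard_singleton v
  have hdy'' : degp C' y' = 1 := by unfold degp; rw [hNSy']; exact Set.ncard_singleton v
  have hdw : ∀ w, w ≠ v → w ≠ x → w ≠ z → w ≠ y → w ≠ y' → degp C' w = degp C w := by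
    intro w h1 h2 h3 h4 h5
    unfold degp
    rw [hNSw w h1 h2 h3 h4 h5]
  -- the three easy conclusions
  have hmax' : ∀ w, degp C' w ≤ degp C' v := by
    intro w
    by_cases h1 : w = v
    · exact h1 ▸ le_refl _
    by_cases h2 : w = x
    · rw [h2, hdx', hdv']; have := hmax x; omega
    by_cases h3 : w = z
    · rw [h3, hdz', hdv']; omega
    by_cases h4 : w = y
    · rw [h4, hdy', hdv']; omega
    by_cases h5 : w = y'
    · rw [h5, hdy'', hdv']; omega
    · rw [hdw w h1 h2 h3 h4 h5, hdv']; have := hmax w; omega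
  have hdeg' : ℓ + s - 1 ≤ degp C' v := by rw [hdv']; omega
  -- the degree power sum inequality
  have hepC : ep p C < ep p C' := by
    set S : Finset V := {v, x, z, y, y'} with hSdef
    have hsplit : ∀ G : SimpleGraph V, ep p G = (∑ w ∈ Finset.univ \ S, degp G w ^ p) +
        (degp G v ^ p + (degp G x ^ p + (degp G z ^ p + (degp G y ^ p + degp G y' ^ p)))) := by
      intro G
      have h0 : ep p G = ∑ w ∈ Finset.univ, degp G w ^ p := rfl
      rw [h0, ← Finset.sum_sdiff (Finset.subset_univ S)]
      congr 1
      rw [hSdef]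
      rw [Finset.sum_insert (by simp [nvx, nvz, nvy, nvy']),
        Finset.sum_insert (by simp [nxz, nxy, nxy']),
        Finset.sum_insert (by simp [nzy, nzy']),
        Finset.sum_insert (by simp [nyy']), Finset.sum_singleton]
    rw [hsplit C, hsplit C']
    have hsame : ∑ w ∈ Finset.univ \ S, degp C' w ^ p = ∑ w ∈ Finset.univ \ S, degp C w ^ p := by
      apply Finset.sum_congr rfl
      intro w hw
      rw [Finset.mem_sdiff] at hw
      have hw2 := hw.2
      rw [hSdef] at hw2
      simp only [Finset.mem_insert, Finset.mem_singleton, not_or] at hw2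
      rw [hdw w hw2.1 hw2.2.1 hw2.2.2.1 hw2.2.2.2.1 hw2.2.2.2.2]
    rw [hsame]
    have h4v : 4 ≤ degp C v := by omega
    have hnum := pd_main_num p (degp C v) (degp C x) hp h4v hdx2 (hmax x)
    rw [hdv', hdx', hdCz, hdCy, hdCy', hdz', hdy', hdy'']
    simp only [one_pow]
    apply Nat.add_lt_add_left
    linarith [hnum]
  -- freeness of C'
  have hfree' : Free (broomG ℓ s) C' := by
    rintro ⟨f, hf⟩
    have hTmem : ∀ t : Fin (ℓ + s), (f t = z ∨ f t = y ∨ f t = y') →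
        ∀ u, (broomG ℓ s).Adj t u → f u = v := by
      intro t ht u hadjB
      have h := hf t u hadjB
      rcases ht with e|e|e <;> rw [e] at h
      exacts [(hNz _).1 h, (hNy _).1 h, (hNy' _).1 h]
    set T : Finset (Fin (ℓ + s)) := Finset.univ.filter (fun t => f t = z ∨ f t = y ∨ f t = y')
      with hTdef
    have hT : ∀ t, t ∈ T ↔ (f t = z ∨ f t = y ∨ f t = y') := by
      intro t; rw [hTdef]; simp
    set N : Finset V := (Set.toFinite (C.neighborSet v)).toFinset with hNdef
    have hNmem : ∀ u, u ∈ N ↔ C.Adj v u := by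
      intro u; rw [hNdef, Set.Finite.mem_toFinset]; rfl
    have hNcard : ℓ + s - 1 ≤ N.card := by
      have he : degp C v = N.card := by
        rw [hNdef]; exact Set.ncard_eq_toFinset_card _ (Set.toFinite _)
      omega
    set I : Finset V := (Finset.univ \ T).image f with hIdef
    have hIcard : I.card = (ℓ + s) - T.card := by
      rw [hIdef, Finset.card_image_of_injective _ f.injective,
        Finset.card_sdiff_of_subset (Finset.subset_univ T)]
      simp
    set U : Finset V := N \ I with hUdef
    have hUcard : T.card ≤ U.card := by
      rcases Finset.eq_empty_or_nonempty T with hTe | ⟨t, ht⟩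
      · simp [hTe]
      · obtain ⟨u, hu⟩ := pd_broom_ex_adj ℓ s hl t
        have hfu : f u = v := hTmem t ((hT t).1 ht) u hu
        have huT : u ∉ T := by
          intro hc
          rcases (hT u).1 hc with e|e|e <;> rw [hfu] at e
          exacts [nvz e, nvy e, nvy' e]
        have hvI : v ∈ I := by
          rw [hIdef]
          exact Finset.mem_image.2 ⟨u, by simp [huT], hfu⟩
        have hvN : v ∉ N := fun hc => C.irrefl ((hNmem v).1 hc)
        have hUI : U = N \ I.erase v := by
          rw [hUdef]
          ext a
          simp only [Finset.mem_sdiff, Finset.mem_erase]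
          constructor
          · rintro ⟨ha1, ha2⟩; exact ⟨ha1, fun hc => ha2 hc.2⟩
          · rintro ⟨ha1, ha2⟩
            refine ⟨ha1, fun hc => ha2 ⟨?_, hc⟩⟩
            rintro rfl; exact hvN ha1
        have hle := Finset.le_card_sdiff (I.erase v) N
        have herase : (I.erase v).card = I.card - 1 := Finset.card_erase_of_mem hvI
        have hTpos : 0 < T.card := Finset.card_pos.2 ⟨t, ht⟩
        have hTle : T.card ≤ ℓ + s := by
          have := Finset.card_le_univ T; simpa using this
        have hIpos : 1 ≤ #I := Finset.card_pos.2 ⟨v, hvI⟩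
        have h1 : #T ≤ #N - #(I.erase v) := by omega
        rw [hUI]
        exact le_trans h1 hle
    obtain ⟨W, hWU, hWcard⟩ := Finset.exists_subset_card_eq hUcard
    have eqv := Finset.equivOfCardEq (hWcard.symm)
    set g : Fin (ℓ + s) → V := fun a => if h : a ∈ T then ((eqv ⟨a, h⟩ : W) : V) else f a
      with hgdef
    have hgT : ∀ a (h : a ∈ T), g a = ((eqv ⟨a, h⟩ : W) : V) := by
      intro a h; rw [hgdef]; simp only [dif_pos h]
    have hgnT : ∀ a, a ∉ T → g a = f a := by
      intro a h; rw [hgdef]; simp only [dif_neg h]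
    have hgW : ∀ a (h : a ∈ T), g a ∈ W := by
      intro a h; rw [hgT a h]; exact (eqv ⟨a, h⟩).2
    have hWprop : ∀ w ∈ W, C.Adj v w ∧ w ∉ I := by
      intro w hw
      have hw2 := hWU hw
      rw [hUdef, Finset.mem_sdiff] at hw2
      exact ⟨(hNmem w).1 hw2.1, hw2.2⟩
    have hfI : ∀ a, a ∉ T → f a ∈ I := by
      intro a h; rw [hIdef]; exact Finset.mem_image.2 ⟨a, by simp [h], rfl⟩
    have hginj : Function.Injective g := by
      intro a b hab
      by_cases ha : a ∈ T <;> by_cases hb : b ∈ T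
      · rw [hgT a ha, hgT b hb] at hab
        exact congrArg Subtype.val (eqv.injective (Subtype.ext hab))
      · exfalso
        apply (hWprop _ (hgW a ha)).2
        rw [hab, hgnT b hb]
        exact hfI b hb
      · exfalso
        apply (hWprop _ (hgW b hb)).2
        rw [← hab, hgnT a ha]
        exact hfI a ha
      · rw [hgnT a ha, hgnT b hb] at hab
        exact f.injective hab
    have hgadj : ∀ a b, (broomG ℓ s).Adj a b → C.Adj (g a) (g b) := by
      intro a b hb
      by_cases ha : a ∈ T <;> by_cases hbT : b ∈ T
      · exfalso
        have h1 : f b = v := hTmem a ((hT a).1 ha) b hb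
        rcases (hT b).1 hbT with e1|e1|e1 <;> rw [h1] at e1
        exacts [nvz e1, nvy e1, nvy' e1]
      · have h1 : f b = v := hTmem a ((hT a).1 ha) b hb
        rw [hgnT b hbT, h1]
        exact ((hWprop _ (hgW a ha)).1).symm
      · have h1 : f a = v := hTmem b ((hT b).1 hbT) a hb.symm
        rw [hgnT a ha, h1]
        exact (hWprop _ (hgW b hbT)).1
      · rw [hgnT a ha, hgnT b hbT]
        have h := hf a b hb
        have ha' : ¬(f a = z ∨ f a = y ∨ f a = y') := fun hc => ha ((hT a).2 hc)
        have hb' : ¬(f b = z ∨ f b = y ∨ f b = y') := fun hc => hbT ((hT b).2 hc)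
        rcases (hadj _ _).1 h with ⟨h1, -⟩ | ⟨e1, -⟩
        · exact h1
        · exfalso
          rcases e1 with e|e|e <;> rw [Sym2.eq_iff] at e <;> rcases e with ⟨e1, e2⟩|⟨e1, e2⟩ <;>
            first
            | exact ha' (Or.inl e1)
            | exact hb' (Or.inl e2)
            | exact ha' (Or.inr (Or.inl e1))
            | exact hb' (Or.inr (Or.inl e2))
            | exact ha' (Or.inr (Or.inr e1))
            | exact hb' (Or.inr (Or.inr e2))
    exact hfree ⟨⟨g, hginj⟩, hgadj⟩
  exact ⟨hfree', hmax', hdeg', hepC⟩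

end Paper
end
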